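/- arXiv:1712.07954 — 7 statements merged into one kernel-verified Lean document; each statement's English description precedes it below -/
import Mathlib

section
/- Under the parallel transport equation Ψ'(s) = [P'(s), P(s)] Ψ(s), the quantity Ψ(s)* P(s) Ψ(s) is constant in s. In particular, if the columns of Ψ(s₀) span the range of P(s₀), then the columns of Ψ(s) span the range of P(s) for all s. -/
/-!
Since `P` and `P'` are self-adjoint, the generator `A = [P', P]` is skew-adjoint, so `Ψ*Ψ` is
constant, equal to the identity. Differentiating `P² = P` gives `P' = P'P + PP'`, hence
`PP'P = 0` and `P' = [A, P]`. The frame projector `ΨΨ*` satisfies the same linear equation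
`X' = [A, X]` and equals `P` at `s₀`, so by uniqueness of solutions `ΨΨ* = P` everywhere.
Then `PΨ = ΨΨ*Ψ = Ψ`, which gives both claims.
-/

open ContinuousLinearMap Set
open scoped NNReal

section ODE

variable {E : Type*} [NormedAddCommGroup E] [NormedSpace ℝ E]

theorem ODE_solution_unique_univ_of_continuous_lipschitz {v : ℝ → E → E} {K : ℝ → ℝ≥0}
    (hK : Continuous K) (hv : ∀ t, LipschitzWith (K t) (v t)) {f g : ℝ → E} {t₀ : ℝ}
    (hf : ∀ t, HasDerivAt f (v t (f t)) t) (hg : ∀ t, HasDerivAt g (v t (g t)) t)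
    (heq : f t₀ = g t₀) : f = g := by
  funext t
  obtain ⟨a, b, ht, ht₀⟩ : ∃ a b, t ∈ Ioo a b ∧ t₀ ∈ Ioo a b :=
    ⟨min t t₀ - 1, max t t₀ + 1, by grind, by grind⟩
  obtain ⟨C, hC⟩ := (isCompact_Icc (a := a) (b := b)).bddAbove_image hK.continuousOn
  exact ODE_solution_unique_of_mem_Ioo (s := fun _ => univ)
    (fun s hs => ((hv s).weaken (hC ⟨s, Ioo_subset_Icc_self hs, rfl⟩)).lipschitzOnWith)
    ht₀ (fun s _ => ⟨hf s, trivial⟩) (fun s _ => ⟨hg s, trivial⟩) heq ht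

end ODE

section Commutator

variable {R : Type*} [NormedRing R]

theorem lipschitzWith_commutator (a : R) :
    LipschitzWith (2 * ‖a‖₊) fun x => a * x - x * a := by
  refine LipschitzWith.of_dist_le_mul fun x y => ?_
  calc dist (a * x - x * a) (a * y - y * a) = ‖a * (x - y) - (x - y) * a‖ := by
        rw [dist_eq_norm, mul_sub, sub_mul]; congr 1; abel
    _ ≤ ‖a‖ * ‖x - y‖ + ‖x - y‖ * ‖a‖ :=
        (norm_sub_le _ _).trans (add_le_add (norm_mul_le _ _) (norm_mul_le _ _))
    _ = 2 * ‖a‖₊ * dist x y := by rw [dist_eq_norm]; push_cast; ring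

theorem eq_of_hasDerivAt_commutator [NormedSpace ℝ R] {A X Y : ℝ → R} (hA : Continuous A)
    (hX : ∀ t, HasDerivAt X (A t * X t - X t * A t) t)
    (hY : ∀ t, HasDerivAt Y (A t * Y t - Y t * A t) t) {t₀ : ℝ} (h : X t₀ = Y t₀) : X = Y :=
  ODE_solution_unique_univ_of_continuous_lipschitz (v := fun t x => A t * x - x * A t)
    (K := fun t => 2 * ‖A t‖₊) (by fun_prop) (fun t => lipschitzWith_commutator (A t)) hX hY h

theorem commutator_commutator_eq_of_isIdempotentElem {S : Type*} [Ring S] {p q : S}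
    (hp : IsIdempotentElem p) (hq : q * p + p * q = q) :
    (q * p - p * q) * p - p * (q * p - p * q) = q := by
  have hpqp : p * q * p = 0 := by
    have h := congrArg (p * ·) hq
    simp only [mul_add, ← mul_assoc, hp.eq] at h
    exact add_eq_right.mp h
  calc (q * p - p * q) * p - p * (q * p - p * q)
      = q * (p * p) + (p * p) * q - 2 * (p * q * p) := by noncomm_ring
    _ = q := by rw [hp.eq, hpqp, hq]; simp

end Commutator

section Derivatives

variable {E F G : Type*} [NormedAddCommGroup E] [NormedSpace ℂ E]
  [NormedAddCommGroup F] [NormedSpace ℂ F] [NormedAddCommGroup G] [NormedSpace ℂ G]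

theorem HasDerivAt.complex_clm_comp {c : ℝ → F →L[ℂ] G} {d : ℝ → E →L[ℂ] F}
    {c' : F →L[ℂ] G} {d' : E →L[ℂ] F} {x : ℝ} (hc : HasDerivAt c c' x)
    (hd : HasDerivAt d d' x) :
    HasDerivAt (fun t => c t ∘L d t) (c' ∘L d x + c x ∘L d') x := by
  have := ((compL ℂ E F G).bilinearRestrictScalars ℝ).hasDerivAt_of_bilinear
    (fun _ => hc) (fun _ => hd)
  simpa [add_comm] using this

theorem HasDerivAt.comp_add_comp_eq_of_isIdempotentElem {P : ℝ → E →L[ℂ] E}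
    {P' : E →L[ℂ] E} {x : ℝ} (hP : HasDerivAt P P' x) (hproj : ∀ t, IsIdempotentElem (P t)) :
    P' * P x + P x * P' = P' := by
  have h := hP.complex_clm_comp hP
  simp only [show (fun t => P t ∘L P t) = P from funext fun t => (hproj t).eq] at h
  exact h.unique hP

theorem HasDerivAt.commutator_of_isIdempotentElem {P : ℝ → E →L[ℂ] E} {P' : E →L[ℂ] E}
    {x : ℝ} (hP : HasDerivAt P P' x) (hproj : ∀ t, IsIdempotentElem (P t)) :
    HasDerivAt P ((P' * P x - P x * P') * P x - P x * (P' * P x - P x * P')) x := by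
  rwa [commutator_commutator_eq_of_isIdempotentElem (hproj x)
    (hP.comp_add_comp_eq_of_isIdempotentElem hproj)]

end Derivatives

section Adjoint

variable {E F : Type*} [NormedAddCommGroup E] [InnerProductSpace ℂ E] [CompleteSpace E]
  [NormedAddCommGroup F] [InnerProductSpace ℂ F] [CompleteSpace F]

theorem HasDerivAt.adjoint {f : ℝ → E →L[ℂ] F} {f' : E →L[ℂ] F} {x : ℝ}
    (h : HasDerivAt f f' x) :
    HasDerivAt (fun t => ContinuousLinearMap.adjoint (f t)) (ContinuousLinearMap.adjoint f') x :=
  ((ContinuousLinearMap.adjoint.toLinearEquiv.toAddMonoidHom.toRealLinearMap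
    ContinuousLinearMap.adjoint.continuous).hasFDerivAt.comp_hasDerivAt x h :)

theorem HasDerivAt.adjoint_eq_self {P : ℝ → F →L[ℂ] F} {P' : F →L[ℂ] F} {x : ℝ}
    (hP : HasDerivAt P P' x) (hsa : ∀ t, ContinuousLinearMap.adjoint (P t) = P t) :
    ContinuousLinearMap.adjoint P' = P' := by
  have h := hP.adjoint
  simp only [hsa] at h
  exact h.unique hP

variable {A : ℝ → F →L[ℂ] F} {Ψ : ℝ → E →L[ℂ] F}

theorem adjoint_comp_self_eq_of_hasDerivAt (hA : ∀ t, adjoint (A t) = -A t)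
    (hΨ : ∀ t, HasDerivAt Ψ (A t ∘L Ψ t) t) (s t : ℝ) :
    adjoint (Ψ s) ∘L Ψ s = adjoint (Ψ t) ∘L Ψ t := by
  have hderiv (t : ℝ) : HasDerivAt (fun t => adjoint (Ψ t) ∘L Ψ t) 0 t := by
    convert (hΨ t).adjoint.complex_clm_comp (hΨ t) using 1
    simp [adjoint_comp, hA, comp_assoc]
  exact is_const_of_deriv_eq_zero (fun t => (hderiv t).differentiableAt)
    (fun t => (hderiv t).deriv) s t

theorem hasDerivAt_comp_adjoint (hA : ∀ t, adjoint (A t) = -A t)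
    (hΨ : ∀ t, HasDerivAt Ψ (A t ∘L Ψ t) t) (t : ℝ) :
    HasDerivAt (fun t => Ψ t ∘L adjoint (Ψ t))
      (A t * (Ψ t ∘L adjoint (Ψ t)) - (Ψ t ∘L adjoint (Ψ t)) * A t) t := by
  convert (hΨ t).complex_clm_comp (hΨ t).adjoint using 1
  simp only [adjoint_comp, hA, comp_neg, comp_assoc, mul_def]
  abel

end Adjoint

/-- Under the parallel transport equation `Ψ' = [P', P] Ψ`, the quantity
`Ψ(s)* P(s) Ψ(s)` is constant in `s`; in particular, if the columns of `Ψ(s₀)` form an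
orthonormal basis of the range of `P(s₀)` (`Ψ(s₀)*Ψ(s₀) = 1`, `Ψ(s₀)Ψ(s₀)* = P(s₀)`), then
the columns of `Ψ(s)` span the range of `P(s)` for all `s`. -/
theorem parallel_transport_preserves_spanning
    {H : Type*} [NormedAddCommGroup H] [InnerProductSpace ℂ H] [CompleteSpace H]
    {n : ℕ} (P P' : ℝ → (H →L[ℂ] H)) (Ψ : ℝ → (EuclideanSpace ℂ (Fin n) →L[ℂ] H))
    (hPC1 : ContDiff ℝ 1 P) (hP' : ∀ s, HasDerivAt P (P' s) s)
    (hproj : ∀ s, (P s) ∘L (P s) = P s)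
    (hsa : ∀ s, ContinuousLinearMap.adjoint (P s) = P s)
    (hΨ : ∀ s, HasDerivAt Ψ (((P' s ∘L P s) - (P s ∘L P' s)) ∘L Ψ s) s)
    (s₀ : ℝ)
    (hON : (ContinuousLinearMap.adjoint (Ψ s₀)) ∘L Ψ s₀ = ContinuousLinearMap.id ℂ _)
    (hframe : Ψ s₀ ∘L (ContinuousLinearMap.adjoint (Ψ s₀)) = P s₀) :
    (∀ s, (ContinuousLinearMap.adjoint (Ψ s)) ∘L (P s) ∘L Ψ s
        = (ContinuousLinearMap.adjoint (Ψ s₀)) ∘L (P s₀) ∘L Ψ s₀) ∧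
    (∀ s, LinearMap.range (Ψ s : EuclideanSpace ℂ (Fin n) →ₗ[ℂ] H) = LinearMap.range (P s : H →ₗ[ℂ] H)) := by
  set A : ℝ → (H →L[ℂ] H) := fun s => P' s ∘L P s - P s ∘L P' s
  have hA_skew (s : ℝ) : adjoint (A s) = -A s := by
    simp [A, adjoint_comp, hsa, (hP' s).adjoint_eq_self hsa]
  have hA_cont : Continuous A := by
    have hP'_cont : Continuous P' :=
      funext (fun s => (hP' s).deriv) ▸ hPC1.continuous_deriv le_rfl
    have hP_cont : Continuous P := hPC1.continuous
    fun_prop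
  have hisom (s : ℝ) : adjoint (Ψ s) ∘L Ψ s = ContinuousLinearMap.id ℂ _ :=
    (adjoint_comp_self_eq_of_hasDerivAt hA_skew hΨ s s₀).trans hON
  have hframe_all : (fun s => Ψ s ∘L adjoint (Ψ s)) = P :=
    eq_of_hasDerivAt_commutator hA_cont (hasDerivAt_comp_adjoint hA_skew hΨ)
      (fun s => (hP' s).commutator_of_isIdempotentElem hproj) hframe
  have hPΨ (s : ℝ) : P s ∘L Ψ s = Ψ s := by
    rw [← congrFun hframe_all s, comp_assoc, hisom s, comp_id]
  refine ⟨fun s => by rw [hPΨ s, hPΨ s₀, hisom s, hisom s₀], fun s => le_antisymm ?_ ?_⟩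
  · rw [← hPΨ s]
    exact LinearMap.range_comp_le_range (Ψ s : EuclideanSpace ℂ (Fin n) →ₗ[ℂ] H)
      (P s : H →ₗ[ℂ] H)
  · rw [← congrFun hframe_all s]
    exact LinearMap.range_comp_le_range (adjoint (Ψ s) : H →ₗ[ℂ] EuclideanSpace ℂ (Fin n))
      (Ψ s : EuclideanSpace ℂ (Fin n) →ₗ[ℂ] H)
end

section
/- Let Φ : X → (ℂⁿ →L[ℂ] H) be a smooth family of isometries (Φ*Φ = Id) on a smooth manifold X, and let P := Φ Φ*. Then the 2-form −i Tr(dΦ* ∧ dΦ) equals −i Tr(P dP ∧ dP); i.e., the Berry curvature of the frame depends only on the projection P. -/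
set_option maxHeartbeats 1000000

open ContinuousLinearMap

/-- The adjoint as a real continuous linear map. -/
noncomputable def adjR (H : Type*) [NormedAddCommGroup H] [InnerProductSpace ℂ H]
    [FiniteDimensional ℂ H] (n : ℕ) :
    (EuclideanSpace ℂ (Fin n) →L[ℂ] H) →L[ℝ] (H →L[ℂ] EuclideanSpace ℂ (Fin n)) :=
  LinearMap.mkContinuous
    { toFun := ContinuousLinearMap.adjoint
      map_add' := fun f g => map_add _ f g
      map_smul' := fun r f => by
        simp only [RingHom.id_apply, ← algebraMap_smul ℂ r f, ← algebraMap_smul ℂ r (adjoint f),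
          LinearIsometryEquiv.map_smulₛₗ]
        norm_num }
    1 (fun f => by simp [LinearIsometryEquiv.norm_map])

@[simp] lemma adjR_apply {H : Type*} [NormedAddCommGroup H] [InnerProductSpace ℂ H]
    [FiniteDimensional ℂ H] {n : ℕ} (f : EuclideanSpace ℂ (Fin n) →L[ℂ] H) :
    adjR H n f = ContinuousLinearMap.adjoint f := rfl

/-- Composition of complex CLMs is a real bounded bilinear map. -/
lemma isBBM_compR {A B C : Type*} [NormedAddCommGroup A] [NormedSpace ℂ A]
    [NormedAddCommGroup B] [NormedSpace ℂ B] [NormedAddCommGroup C] [NormedSpace ℂ C] :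
    IsBoundedBilinearMap ℝ (fun p : (B →L[ℂ] C) × (A →L[ℂ] B) => p.1.comp p.2) where
  add_left := fun f f' g => add_comp f f' g
  smul_left := fun r f g => by
    rw [← algebraMap_smul ℂ r f, smul_comp, algebraMap_smul]
  add_right := fun f g g' => comp_add f g g'
  smul_right := fun r f g => by
    rw [← algebraMap_smul ℂ r g, comp_smul, algebraMap_smul]
  bound := ⟨1, one_pos, fun f g => by simpa using opNorm_comp_le f g⟩

/-- Key algebraic trace identity. -/
lemma key_trace {H : Type*} [NormedAddCommGroup H] [InnerProductSpace ℂ H]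
    [FiniteDimensional ℂ H] {n : ℕ}
    (F A B : EuclideanSpace ℂ (Fin n) →L[ℂ] H)
    (Fs As Bs : H →L[ℂ] EuclideanSpace ℂ (Fin n))
    (h1 : Fs ∘L F = ContinuousLinearMap.id ℂ _)
    (hA : Fs ∘L A + As ∘L F = 0) (hB : Fs ∘L B + Bs ∘L F = 0) :
    LinearMap.trace ℂ H ↑((F ∘L Fs) ∘L (F ∘L As + A ∘L Fs) ∘L (F ∘L Bs + B ∘L Fs)) =
      LinearMap.trace ℂ (EuclideanSpace ℂ (Fin n)) ↑(As ∘L B)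
        + LinearMap.trace ℂ (EuclideanSpace ℂ (Fin n)) ↑((Fs ∘L A) ∘L (Fs ∘L B)) := by
  have h1' : ∀ z, Fs (F z) = z := fun z => by
    simpa using ContinuousLinearMap.ext_iff.mp h1 z
  have hA' : ∀ z, As (F z) = -(Fs (A z)) := fun z => by
    have := ContinuousLinearMap.ext_iff.mp hA z
    simp only [add_apply, comp_apply, zero_apply] at this
    exact eq_neg_of_add_eq_zero_right this
  have hB' : ∀ z, Bs (F z) = -(Fs (B z)) := fun z => by
    have := ContinuousLinearMap.ext_iff.mp hB z
    simp only [add_apply, comp_apply, zero_apply] at this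
    exact eq_neg_of_add_eq_zero_right this
  have hM : (Fs ∘L ((F ∘L As + A ∘L Fs) ∘L (F ∘L Bs + B ∘L Fs))) ∘L F
      = As ∘L B + (Fs ∘L A) ∘L (Fs ∘L B) := by
    ext z
    simp [comp_apply, add_apply, h1', hA', hB', map_add, map_neg]
  have e1 : ((F ∘L Fs) ∘L (F ∘L As + A ∘L Fs) ∘L (F ∘L Bs + B ∘L Fs) : H →ₗ[ℂ] H)
      = (F : _ →ₗ[ℂ] _) ∘ₗ ((Fs ∘L ((F ∘L As + A ∘L Fs) ∘L (F ∘L Bs + B ∘L Fs))) :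
          H →ₗ[ℂ] EuclideanSpace ℂ (Fin n)) := by
    simp only [ContinuousLinearMap.toLinearMap_comp]
    rw [LinearMap.comp_assoc]
  rw [e1, LinearMap.trace_comp_comm', ← ContinuousLinearMap.toLinearMap_comp, hM]
  simp

/-- For a smooth family of isometries `Φ : X → (ℂⁿ →L[ℂ] H)` (`Φ*Φ = 1`)
with associated projection `P = Φ Φ*`, the 2-form `−i Tr(dΦ* ∧ dΦ)` equals
`−i Tr(P dP ∧ dP)`, evaluated on any pair of tangent vectors `u, v` at any point `x`:
the Berry curvature of the frame depends only on `P`. -/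
theorem berry_curvature_gauge_invariant
    {E : Type*} [NormedAddCommGroup E] [NormedSpace ℝ E]
    {H : Type*} [NormedAddCommGroup H] [InnerProductSpace ℂ H] [FiniteDimensional ℂ H]
    {n : ℕ} (Φ : E → (EuclideanSpace ℂ (Fin n) →L[ℂ] H))
    (hΦ : ContDiff ℝ (⊤ : ℕ∞) Φ)
    (hiso : ∀ x, (ContinuousLinearMap.adjoint (Φ x)) ∘L Φ x = ContinuousLinearMap.id ℂ _)
    (P : E → (H →L[ℂ] H)) (hP : ∀ x, P x = Φ x ∘L ContinuousLinearMap.adjoint (Φ x)) :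
    ∀ (x : E) (u v : E),
      (-Complex.I) *
        (LinearMap.trace ℂ (EuclideanSpace ℂ (Fin n))
            ↑((ContinuousLinearMap.adjoint (fderiv ℝ Φ x u)) ∘L (fderiv ℝ Φ x v))
         - LinearMap.trace ℂ (EuclideanSpace ℂ (Fin n))
            ↑((ContinuousLinearMap.adjoint (fderiv ℝ Φ x v)) ∘L (fderiv ℝ Φ x u)))
      = (-Complex.I) *
        (LinearMap.trace ℂ H ↑(P x ∘L (fderiv ℝ P x u) ∘L (fderiv ℝ P x v))
         - LinearMap.trace ℂ H ↑(P x ∘L (fderiv ℝ P x v) ∘L (fderiv ℝ P x u))) := by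
  intro x u v
  have hΦd : Differentiable ℝ Φ := hΦ.differentiable (by simp)
  set Ψ : E → (H →L[ℂ] EuclideanSpace ℂ (Fin n)) :=
    fun y => ContinuousLinearMap.adjoint (Φ y) with hΨdef
  have hΨd : Differentiable ℝ Ψ := (adjR H n).differentiable.comp hΦd
  have hfΨ : ∀ w, fderiv ℝ Ψ x w = ContinuousLinearMap.adjoint (fderiv ℝ Φ x w) := by
    intro w
    have : fderiv ℝ Ψ x = (adjR H n).comp (fderiv ℝ Φ x) :=
      ((adjR H n).hasFDerivAt.comp x (hΦd x).hasFDerivAt).fderiv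
    rw [this]; rfl
  -- derivative of P
  have hPfun : P = fun y => (Φ y).comp (Ψ y) := funext fun y => hP y
  have hfP : ∀ w, fderiv ℝ P x w
      = (Φ x) ∘L (fderiv ℝ Ψ x w) + (fderiv ℝ Φ x w) ∘L (Ψ x) := by
    intro w
    have hb : HasFDerivAt (fun y => (Φ y).comp (Ψ y))
        ((isBBM_compR.deriv (Φ x, Ψ x)).comp ((fderiv ℝ Φ x).prod (fderiv ℝ Ψ x))) x := by
      exact (isBBM_compR.hasFDerivAt (Φ x, Ψ x)).comp x
        (HasFDerivAt.prodMk (hΦd x).hasFDerivAt (hΨd x).hasFDerivAt)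
    rw [hPfun, hb.fderiv]
    simp [IsBoundedBilinearMap.deriv_apply]
  -- differentiating the isometry relation
  have hrel : ∀ w, (Ψ x) ∘L (fderiv ℝ Φ x w)
      + (ContinuousLinearMap.adjoint (fderiv ℝ Φ x w)) ∘L (Φ x) = 0 := by
    intro w
    have hconst : (fun y => (Ψ y).comp (Φ y))
        = fun _ : E => ContinuousLinearMap.id ℂ (EuclideanSpace ℂ (Fin n)) :=
      funext fun y => hiso y
    have hb : HasFDerivAt (fun y => (Ψ y).comp (Φ y))
        ((isBBM_compR.deriv (Ψ x, Φ x)).comp ((fderiv ℝ Ψ x).prod (fderiv ℝ Φ x))) x := by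
      exact (isBBM_compR.hasFDerivAt (Ψ x, Φ x)).comp x
        (HasFDerivAt.prodMk (hΨd x).hasFDerivAt (hΦd x).hasFDerivAt)
    have h0 : fderiv ℝ (fun y => (Ψ y).comp (Φ y)) x = 0 := by
      rw [hconst]; exact fderiv_const_apply _
    have := hb.fderiv
    rw [h0] at this
    have := congrFun (congrArg DFunLike.coe this.symm) w
    simpa [IsBoundedBilinearMap.deriv_apply, hfΨ] using this
  -- notation
  set F := Φ x
  set Fs := Ψ x
  set A := fderiv ℝ Φ x u
  set B := fderiv ℝ Φ x v
  set As := ContinuousLinearMap.adjoint A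
  set Bs := ContinuousLinearMap.adjoint B
  have hPx : P x = F ∘L Fs := hP x
  have hdu : fderiv ℝ P x u = F ∘L As + A ∘L Fs := by rw [hfP u, hfΨ u]
  have hdv : fderiv ℝ P x v = F ∘L Bs + B ∘L Fs := by rw [hfP v, hfΨ v]
  have hAB := key_trace F A B Fs As Bs (hiso x) (hrel u) (hrel v)
  have hBA := key_trace F B A Fs Bs As (hiso x) (hrel v) (hrel u)
  rw [hPx, hdu, hdv, hAB, hBA]
  have hsym : LinearMap.trace ℂ (EuclideanSpace ℂ (Fin n)) ↑((Fs ∘L A) ∘L (Fs ∘L B))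
      = LinearMap.trace ℂ (EuclideanSpace ℂ (Fin n)) ↑((Fs ∘L B) ∘L (Fs ∘L A)) := by
    rw [ContinuousLinearMap.toLinearMap_comp (Fs ∘L A) (Fs ∘L B),
      ContinuousLinearMap.toLinearMap_comp (Fs ∘L B) (Fs ∘L A), LinearMap.trace_comp_comm']
  rw [hsym]
  ring
end

section
/- For a smooth family of orthogonal projections P on a smooth manifold, the Berry curvature F[P] := −i Tr(P dP ∧ dP) is a closed 2-form: d F[P] = 0. -/
open ContinuousLinearMap

section BerryAux

variable {E : Type*} [NormedAddCommGroup E] [NormedSpace ℝ E]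
variable {H : Type*} [NormedAddCommGroup H] [InnerProductSpace ℂ H] [FiniteDimensional ℂ H]

/-- The trace of a continuous linear map, as a continuous `ℝ`-linear map. -/
noncomputable def tauAux : (H →L[ℂ] H) →L[ℝ] ℂ :=
  ((LinearMap.toContinuousLinearMap
      ((LinearMap.trace ℂ H).comp (ContinuousLinearMap.coeLM ℂ))) :
    (H →L[ℂ] H) →L[ℂ] ℂ).restrictScalars ℝ

lemma tauAux_apply (M : H →L[ℂ] H) : tauAux M = LinearMap.trace ℂ H ↑M := rfl

lemma tauAux_mul_comm (M N : H →L[ℂ] H) : tauAux (M * N) = tauAux (N * M) := by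
  simp only [tauAux_apply]
  rw [show ((M * N : H →L[ℂ] H) : H →ₗ[ℂ] H) = (M : H →ₗ[ℂ] H) * N from rfl,
    show ((N * M : H →L[ℂ] H) : H →ₗ[ℂ] H) = (N : H →ₗ[ℂ] H) * M from rfl,
    LinearMap.trace_mul_comm]

lemma trace3_zero (p X Y Z : H →L[ℂ] H) (hp : p * p = p)
    (hX : X = p * X + X * p) (hY : Y = p * Y + Y * p) (hZ : Z = p * Z + Z * p) :
    tauAux (X * Y * Z) = 0 := by
  set q : H →L[ℂ] H := 1 - p with hq
  have hpq : p * q = 0 := by simp [hq, mul_sub, hp]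
  have hqp : q * p = 0 := by simp [hq, sub_mul, hp]
  have hqq : q * q = q := by simp [hq, mul_sub, sub_mul, hp]
  have h1 : ∀ M : H →L[ℂ] H, p * (q * M) = 0 := fun M => by rw [← mul_assoc, hpq, zero_mul]
  have h2 : ∀ M : H →L[ℂ] H, q * (p * M) = 0 := fun M => by rw [← mul_assoc, hqp, zero_mul]
  have h3 : ∀ M : H →L[ℂ] H, q * (q * M) = q * M := fun M => by rw [← mul_assoc, hqq]
  have h4 : ∀ M : H →L[ℂ] H, p * (p * M) = p * M := fun M => by rw [← mul_assoc, hp]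
  have key : ∀ W : H →L[ℂ] H, W = p * W + W * p → W = p * W * q + q * W * p := by
    intro W hW
    have hpWp : p * (W * p) = 0 := by
      have h := congrArg (fun M => p * M) hW
      simp only [mul_add, ← mul_assoc, hp] at h
      have := left_eq_add.mp h
      rw [mul_assoc] at this; exact this
    simp only [hq, mul_sub, sub_mul, mul_one, one_mul, mul_assoc, hpWp, sub_zero]
    rw [← hW]
  have eX := key X hX
  have eY := key Y hY
  have eZ := key Z hZ
  rw [eX, eY, eZ]
  simp only [mul_add, add_mul, mul_assoc, h1, h2, h3, h4, mul_zero, zero_mul, add_zero, zero_add,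
    map_add, map_zero]
  have e1 : tauAux (p * (X * (q * (Y * (p * (Z * q)))))) = 0 := by
    have h := tauAux_mul_comm (p * (X * (q * (Y * (p * Z))))) q
    simp only [mul_assoc] at h
    rw [h, h2, map_zero]
  have e2 : tauAux (q * (X * (p * (Y * (q * (Z * p)))))) = 0 := by
    have h := tauAux_mul_comm (q * (X * (p * (Y * (q * Z))))) p
    simp only [mul_assoc] at h
    rw [h, h1, map_zero]
  rw [e1, e2, add_zero]

lemma hasFDerivAt_tau_prod (P : E → (H →L[ℂ] H)) (hP : ContDiff ℝ (⊤ : ℕ∞) P) (x v w : E) :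
    HasFDerivAt (fun y => tauAux (P y * fderiv ℝ P y v * fderiv ℝ P y w))
      ((tauAux : (H →L[ℂ] H) →L[ℝ] ℂ).comp
        ((P x * fderiv ℝ P x v) •
            ((ContinuousLinearMap.apply ℝ (H →L[ℂ] H) w).comp (fderiv ℝ (fderiv ℝ P) x))
          + (P x • ((ContinuousLinearMap.apply ℝ (H →L[ℂ] H) v).comp (fderiv ℝ (fderiv ℝ P) x))
              + (fderiv ℝ P x).smulRight (fderiv ℝ P x v)).smulRight (fderiv ℝ P x w))) x := by
  have hP' : ContDiff ℝ (⊤ : ℕ∞) (fderiv ℝ P) := hP.fderiv_right (by simp)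
  have hP1 : HasFDerivAt P (fderiv ℝ P x) x := (hP.differentiable (by simp) x).hasFDerivAt
  have hP2 : HasFDerivAt (fderiv ℝ P) (fderiv ℝ (fderiv ℝ P) x) x :=
    (hP'.differentiable (by simp) x).hasFDerivAt
  have hAv : HasFDerivAt (fun y => fderiv ℝ P y v)
      ((ContinuousLinearMap.apply ℝ (H →L[ℂ] H) v).comp (fderiv ℝ (fderiv ℝ P) x)) x := by
    exact ((ContinuousLinearMap.apply ℝ (H →L[ℂ] H) v).hasFDerivAt
      (x := fderiv ℝ P x)).comp (f := fderiv ℝ P) x hP2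
  have hAw : HasFDerivAt (fun y => fderiv ℝ P y w)
      ((ContinuousLinearMap.apply ℝ (H →L[ℂ] H) w).comp (fderiv ℝ (fderiv ℝ P) x)) x := by
    exact ((ContinuousLinearMap.apply ℝ (H →L[ℂ] H) w).hasFDerivAt
      (x := fderiv ℝ P x)).comp (f := fderiv ℝ P) x hP2
  exact (tauAux : (H →L[ℂ] H) →L[ℝ] ℂ).hasFDerivAt.comp x ((hP1.mul' hAv).mul' hAw)

lemma fderiv_tau_prod (P : E → (H →L[ℂ] H)) (hP : ContDiff ℝ (⊤ : ℕ∞) P) (x u v w : E) :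
    fderiv ℝ (fun y => tauAux (P y * fderiv ℝ P y v * fderiv ℝ P y w)) x u
      = tauAux (P x * fderiv ℝ P x v * (fderiv ℝ (fderiv ℝ P) x u w)
          + (P x * (fderiv ℝ (fderiv ℝ P) x u v) + fderiv ℝ P x u * fderiv ℝ P x v)
            * fderiv ℝ P x w) := by
  rw [(hasFDerivAt_tau_prod P hP x v w).fderiv]
  simp only [ContinuousLinearMap.comp_apply, ContinuousLinearMap.add_apply,
    ContinuousLinearMap.smul_apply, ContinuousLinearMap.smulRight_apply,
    ContinuousLinearMap.apply_apply, smul_eq_mul]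

end BerryAux

/-- For a smooth family of orthogonal projections `P`, the Berry
curvature `F[P] = −i Tr(P dP ∧ dP)` is a closed 2-form: its exterior derivative,
evaluated on any triple of (constant) tangent vectors `u, v, w`, vanishes. -/
theorem berry_curvature_closed
    {E : Type*} [NormedAddCommGroup E] [NormedSpace ℝ E]
    {H : Type*} [NormedAddCommGroup H] [InnerProductSpace ℂ H] [FiniteDimensional ℂ H]
    (P : E → (H →L[ℂ] H)) (hP : ContDiff ℝ (⊤ : ℕ∞) P)
    (hproj : ∀ x, (P x) ∘L (P x) = P x)
    (hsa : ∀ x, ContinuousLinearMap.adjoint (P x) = P x)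
    (F : E → E → E → ℂ)
    (hF : ∀ x u v, F x u v =
      (-Complex.I) *
        (LinearMap.trace ℂ H ↑(P x ∘L (fderiv ℝ P x u) ∘L (fderiv ℝ P x v))
         - LinearMap.trace ℂ H ↑(P x ∘L (fderiv ℝ P x v) ∘L (fderiv ℝ P x u)))) :
    ∀ (x : E) (u v w : E),
      fderiv ℝ (fun y => F y v w) x u
        - fderiv ℝ (fun y => F y u w) x v
        + fderiv ℝ (fun y => F y u v) x w = 0 := by
  intro x u v w
  have hrw : ∀ v w : E, (fun y => F y v w)
      = fun y => -Complex.I * (tauAux (P y * fderiv ℝ P y v * fderiv ℝ P y w)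
          - tauAux (P y * fderiv ℝ P y w * fderiv ℝ P y v)) := by
    intro v w; funext y; rw [hF]; rfl
  -- derivative formula
  have hder : ∀ a b c : E, fderiv ℝ (fun y => F y b c) x a =
      -Complex.I *
        ((tauAux (P x * fderiv ℝ P x b * (fderiv ℝ (fderiv ℝ P) x a c)
            + (P x * (fderiv ℝ (fderiv ℝ P) x a b) + fderiv ℝ P x a * fderiv ℝ P x b)
              * fderiv ℝ P x c))
          - (tauAux (P x * fderiv ℝ P x c * (fderiv ℝ (fderiv ℝ P) x a b)
            + (P x * (fderiv ℝ (fderiv ℝ P) x a c) + fderiv ℝ P x a * fderiv ℝ P x c)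
              * fderiv ℝ P x b))) := by
    intro a b c
    have h1 := hasFDerivAt_tau_prod P hP x b c
    have h2 := hasFDerivAt_tau_prod P hP x c b
    rw [hrw b c]
    have d1 := h1.differentiableAt
    have d2 := h2.differentiableAt
    rw [fderiv_const_mul (d1.fun_sub d2) (-Complex.I)]
    simp only [ContinuousLinearMap.smul_apply, smul_eq_mul]
    rw [fderiv_fun_sub d1 d2]
    simp only [ContinuousLinearMap.sub_apply]
    rw [fderiv_tau_prod P hP x a b c, fderiv_tau_prod P hP x a c b]
  -- projection identities
  have hp : P x * P x = P x := hproj x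
  have hA : ∀ z : E, fderiv ℝ P x z = P x * fderiv ℝ P x z + fderiv ℝ P x z * P x := by
    intro z
    have h1 : HasFDerivAt P (fderiv ℝ P x) x := (hP.differentiable (by simp) x).hasFDerivAt
    have h2 := h1.mul' h1
    have hfun : (fun y => P y * P y) = P := funext fun y => hproj y
    rw [show P * P = P from hfun] at h2
    have h3 := h2.unique h1
    have h4 := congrArg (fun (L : E →L[ℝ] (H →L[ℂ] H)) => L z) h3
    simp only [ContinuousLinearMap.add_apply, ContinuousLinearMap.smul_apply,
      ContinuousLinearMap.smulRight_apply, smul_eq_mul] at h4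
    exact h4.symm
  have hzero : ∀ a b c : E,
      tauAux (fderiv ℝ P x a * fderiv ℝ P x b * fderiv ℝ P x c) = 0 :=
    fun a b c => trace3_zero (P x) _ _ _ hp (hA a) (hA b) (hA c)
  have hsymm : IsSymmSndFDerivAt ℝ P x := hP.contDiffAt.isSymmSndFDerivAt (by rw [minSmoothness_of_isRCLikeNormedField]; exact WithTop.coe_le_coe.mpr (le_top : (2 : ℕ∞) ≤ ⊤))
  have hB1 : fderiv ℝ (fderiv ℝ P) x v u = fderiv ℝ (fderiv ℝ P) x u v := hsymm v u
  have hB2 : fderiv ℝ (fderiv ℝ P) x w u = fderiv ℝ (fderiv ℝ P) x u w := hsymm w u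
  have hB3 : fderiv ℝ (fderiv ℝ P) x w v = fderiv ℝ (fderiv ℝ P) x v w := hsymm w v
  rw [hder u v w, hder v u w, hder w u v, hB1, hB2, hB3]
  simp only [add_mul, map_add, hzero]
  ring
end

section
/- If P and Q are smooth families of orthogonal projections on a manifold X with P(x) Q(x) = Q(x) P(x) = 0 for all x, then the Berry curvature is additive: F[P + Q] = F[P] + F[Q], where F[R] = −i Tr(R dR ∧ dR). -/
open ContinuousLinearMap

/-- Pure algebra: the cross terms in the trace expansion cancel. -/
lemma cross_trace_key {H : Type*} [AddCommGroup H] [Module ℂ H]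
    [Module.Finite ℂ H] [Module.Free ℂ H]
    (p q a a' b b' : Module.End ℂ H)
    (hp : p * p = p) (hpq : p * q = 0) (hqp : q * p = 0)
    (ha : a * p + p * a = a) (ha' : a' * p + p * a' = a')
    (hb : b * q + q * b = b) (hb' : b' * q + q * b' = b')
    (h1 : a * q + p * b = 0) (h2 : a' * q + p * b' = 0)
    (h3 : b * p + q * a = 0) (h4 : b' * p + q * a' = 0) :
    LinearMap.trace ℂ H ((p + q) * (a + b) * (a' + b')) -
      LinearMap.trace ℂ H ((p + q) * (a' + b') * (a + b)) =
      (LinearMap.trace ℂ H (p * a * a') - LinearMap.trace ℂ H (p * a' * a)) +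
      (LinearMap.trace ℂ H (q * b * b') - LinearMap.trace ℂ H (q * b' * b)) := by
  set T := LinearMap.trace ℂ H with hT
  have cyc : ∀ f g : Module.End ℂ H, T (f * g) = T (g * f) :=
    fun f g => LinearMap.trace_mul_comm ℂ f g
  have e1 : a * q = -(p * b) := eq_neg_of_add_eq_zero_left h1
  have e2 : a' * q = -(p * b') := eq_neg_of_add_eq_zero_left h2
  have e3 : b * p = -(q * a) := eq_neg_of_add_eq_zero_left h3
  have e4 : b' * p = -(q * a') := eq_neg_of_add_eq_zero_left h4
  have e5 : q * a = -(b * p) := eq_neg_of_add_eq_zero_right h3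
  have e6 : q * a' = -(b' * p) := eq_neg_of_add_eq_zero_right h4
  have e7 : p * b = -(a * q) := eq_neg_of_add_eq_zero_right h1
  have e8 : p * b' = -(a' * q) := eq_neg_of_add_eq_zero_right h2
  have s1 : T (p * a * b') = -T (q * a' * a) := by
    calc T (p * a * b') = T (b' * (p * a)) := cyc (p * a) b'
      _ = T (b' * p * a) := by rw [mul_assoc]
      _ = -T (q * a' * a) := by rw [e4, neg_mul, map_neg]
  have s2 : T (p * b * a') = -T (q * a' * a) := by
    calc T (p * b * a') = T (a' * (p * b)) := cyc (p * b) a'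
      _ = -T (a' * a * q) := by rw [e7, mul_neg, map_neg, mul_assoc]
      _ = -T (q * (a' * a)) := by rw [cyc]
      _ = -T (q * a' * a) := by rw [← mul_assoc]
  have s3 : T (p * a' * b) = -T (q * a * a') := by
    calc T (p * a' * b) = T (b * (p * a')) := cyc (p * a') b
      _ = T (b * p * a') := by rw [mul_assoc]
      _ = -T (q * a * a') := by rw [e3, neg_mul, map_neg]
  have s4 : T (p * b' * a) = -T (q * a * a') := by
    calc T (p * b' * a) = T (a * (p * b')) := cyc (p * b') a
      _ = -T (a * a' * q) := by rw [e8, mul_neg, map_neg, mul_assoc]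
      _ = -T (q * (a * a')) := by rw [cyc]
      _ = -T (q * a * a') := by rw [← mul_assoc]
  have s5 : T (q * a * b') = -T (p * b' * b) := by
    calc T (q * a * b') = T (b' * (q * a)) := cyc (q * a) b'
      _ = -T (b' * b * p) := by rw [e5, mul_neg, map_neg, mul_assoc]
      _ = -T (p * (b' * b)) := by rw [cyc]
      _ = -T (p * b' * b) := by rw [← mul_assoc]
  have s6 : T (q * b * a') = -T (p * b' * b) := by
    calc T (q * b * a') = T (a' * (q * b)) := cyc (q * b) a'
      _ = T (a' * q * b) := by rw [mul_assoc]
      _ = -T (p * b' * b) := by rw [e2, neg_mul, map_neg]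
  have s7 : T (q * a' * b) = -T (p * b * b') := by
    calc T (q * a' * b) = T (b * (q * a')) := cyc (q * a') b
      _ = -T (b * b' * p) := by rw [e6, mul_neg, map_neg, mul_assoc]
      _ = -T (p * (b * b')) := by rw [cyc]
      _ = -T (p * b * b') := by rw [← mul_assoc]
  have s8 : T (q * b' * a) = -T (p * b * b') := by
    calc T (q * b' * a) = T (a * (q * b')) := cyc (q * b') a
      _ = T (a * q * b') := by rw [mul_assoc]
      _ = -T (p * b * b') := by rw [e1, neg_mul, map_neg]
  have s9 : T (q * a * a') = T (p * b' * b) := by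
    have expand : q * a * a' = q * a * (a' * p) + q * a * (p * a') := by
      calc q * a * a' = q * a * (a' * p + p * a') := by rw [ha']
        _ = _ := by noncomm_ring
    have z1 : T (q * a * (a' * p)) = 0 := by
      have h : q * a * (a' * p) = (q * a * a') * p := by noncomm_ring
      rw [h, cyc]
      have h2 : p * (q * a * a') = (p * q) * (a * a') := by noncomm_ring
      rw [h2, hpq, zero_mul, map_zero]
    have step2 : T (q * a * (p * a')) = -T (p * a' * b) := by
      rw [e5]
      have h : -(b * p) * (p * a') = -(b * (p * a')) := by
        calc -(b * p) * (p * a') = -(b * ((p * p) * a')) := by noncomm_ring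
          _ = -(b * (p * a')) := by rw [hp]
      rw [h, map_neg, cyc b (p * a')]
    have step3 : T (p * a' * b) = -T (p * b' * b) := by
      have exp : p * a' * b = p * a' * (b * q) + p * a' * (q * b) := by
        calc p * a' * b = p * a' * (b * q + q * b) := by rw [hb]
          _ = _ := by noncomm_ring
      have z2 : T (p * a' * (b * q)) = 0 := by
        have h : p * a' * (b * q) = (p * a' * b) * q := by noncomm_ring
        rw [h, cyc]
        have h2 : q * (p * a' * b) = (q * p) * (a' * b) := by noncomm_ring
        rw [h2, hqp, zero_mul, map_zero]
      have h3 : p * a' * (q * b) = -(p * b' * b) := by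
        have h : p * a' * (q * b) = (p * (a' * q)) * b := by noncomm_ring
        rw [h, e2]
        calc (p * -(p * b')) * b = -((p * p) * b' * b) := by noncomm_ring
          _ = -(p * b' * b) := by rw [hp]
      rw [exp, map_add, z2, h3, map_neg, zero_add]
    rw [expand, map_add, z1, zero_add, step2, step3, neg_neg]
  have s10 : T (q * a' * a) = T (p * b * b') := by
    have expand : q * a' * a = q * a' * (a * p) + q * a' * (p * a) := by
      calc q * a' * a = q * a' * (a * p + p * a) := by rw [ha]
        _ = _ := by noncomm_ring
    have z1 : T (q * a' * (a * p)) = 0 := by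
      have h : q * a' * (a * p) = (q * a' * a) * p := by noncomm_ring
      rw [h, cyc]
      have h2 : p * (q * a' * a) = (p * q) * (a' * a) := by noncomm_ring
      rw [h2, hpq, zero_mul, map_zero]
    have step2 : T (q * a' * (p * a)) = -T (p * a * b') := by
      rw [e6]
      have h : -(b' * p) * (p * a) = -(b' * (p * a)) := by
        calc -(b' * p) * (p * a) = -(b' * ((p * p) * a)) := by noncomm_ring
          _ = -(b' * (p * a)) := by rw [hp]
      rw [h, map_neg, cyc b' (p * a)]
    have step3 : T (p * a * b') = -T (p * b * b') := by
      have exp : p * a * b' = p * a * (b' * q) + p * a * (q * b') := by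
        calc p * a * b' = p * a * (b' * q + q * b') := by rw [hb']
          _ = _ := by noncomm_ring
      have z2 : T (p * a * (b' * q)) = 0 := by
        have h : p * a * (b' * q) = (p * a * b') * q := by noncomm_ring
        rw [h, cyc]
        have h2 : q * (p * a * b') = (q * p) * (a * b') := by noncomm_ring
        rw [h2, hqp, zero_mul, map_zero]
      have h3 : p * a * (q * b') = -(p * b * b') := by
        have h : p * a * (q * b') = (p * (a * q)) * b' := by noncomm_ring
        rw [h, e1]
        calc (p * -(p * b)) * b' = -((p * p) * b * b') := by noncomm_ring
          _ = -(p * b * b') := by rw [hp]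
      rw [exp, map_add, z2, h3, map_neg, zero_add]
    rw [expand, map_add, z1, zero_add, step2, step3, neg_neg]
  simp only [add_mul, mul_add, map_add]
  linear_combination s1 + s2 - s3 - s4 + s5 + s6 - s7 - s8 + 3*s9 - 3*s10

/-- For smooth families of orthogonal projections `P, Q` with
`PQ = QP = 0` pointwise, the Berry curvature `F[R] = −i Tr(R dR ∧ dR)` is additive:
`F[P + Q] = F[P] + F[Q]`, evaluated on any pair of tangent vectors. -/
theorem berry_curvature_additive
    {E : Type*} [NormedAddCommGroup E] [NormedSpace ℝ E]
    {H : Type*} [NormedAddCommGroup H] [InnerProductSpace ℂ H] [FiniteDimensional ℂ H]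
    (P Q : E → (H →L[ℂ] H)) (hP : ContDiff ℝ (⊤ : ℕ∞) P) (hQ : ContDiff ℝ (⊤ : ℕ∞) Q)
    (hPproj : ∀ x, (P x) ∘L (P x) = P x)
    (hPsa : ∀ x, ContinuousLinearMap.adjoint (P x) = P x)
    (hQproj : ∀ x, (Q x) ∘L (Q x) = Q x)
    (hQsa : ∀ x, ContinuousLinearMap.adjoint (Q x) = Q x)
    (hPQ : ∀ x, (P x) ∘L (Q x) = 0) (hQP : ∀ x, (Q x) ∘L (P x) = 0)
    (F : (E → (H →L[ℂ] H)) → E → E → E → ℂ)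
    (hF : ∀ (R : E → (H →L[ℂ] H)) (x u v : E), F R x u v =
      (-Complex.I) *
        (LinearMap.trace ℂ H ↑(R x ∘L (fderiv ℝ R x u) ∘L (fderiv ℝ R x v))
         - LinearMap.trace ℂ H ↑(R x ∘L (fderiv ℝ R x v) ∘L (fderiv ℝ R x u)))) :
    ∀ (x u v : E), F (fun y => P y + Q y) x u v = F P x u v + F Q x u v := by
  intro x u v
  have hPd : Differentiable ℝ P := hP.differentiable (by simp)
  have hQd : Differentiable ℝ Q := hQ.differentiable (by simp)
  -- Product rule for pointwise composition of families of CLMs.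
  have prod : ∀ (f g : E → (H →L[ℂ] H)), Differentiable ℝ f → Differentiable ℝ g → ∀ w : E,
      fderiv ℝ (fun y => f y ∘L g y) x w
        = f x ∘L fderiv ℝ g x w + (fderiv ℝ f x w) ∘L g x := by
    intro f g hf hg w
    have h : (fun y => f y ∘L g y) = fun y => f y * g y := rfl
    rw [h, fderiv_fun_mul' (hf x) (hg x)]
    simp [smul_eq_mul]
    rfl
  -- Leibniz identities for the projection relations, at the level of CLMs.
  have dPP : ∀ w : E, P x ∘L fderiv ℝ P x w + (fderiv ℝ P x w) ∘L P x = fderiv ℝ P x w := by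
    intro w
    have h := prod P P hPd hPd w
    rw [show (fun y => P y ∘L P y) = P from funext hPproj] at h
    exact h.symm
  have dQQ : ∀ w : E, Q x ∘L fderiv ℝ Q x w + (fderiv ℝ Q x w) ∘L Q x = fderiv ℝ Q x w := by
    intro w
    have h := prod Q Q hQd hQd w
    rw [show (fun y => Q y ∘L Q y) = Q from funext hQproj] at h
    exact h.symm
  have dPQ : ∀ w : E, P x ∘L fderiv ℝ Q x w + (fderiv ℝ P x w) ∘L Q x = 0 := by
    intro w
    have h := prod P Q hPd hQd w
    rw [show (fun y => P y ∘L Q y) = fun _ => (0 : H →L[ℂ] H) from funext hPQ] at h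
    simpa using h.symm
  have dQP : ∀ w : E, Q x ∘L fderiv ℝ P x w + (fderiv ℝ Q x w) ∘L P x = 0 := by
    intro w
    have h := prod Q P hQd hPd w
    rw [show (fun y => Q y ∘L P y) = fun _ => (0 : H →L[ℂ] H) from funext hQP] at h
    simpa using h.symm
  -- derivative of the sum
  have dsum : ∀ w : E, fderiv ℝ (fun y => P y + Q y) x w = fderiv ℝ P x w + fderiv ℝ Q x w := by
    intro w
    rw [fderiv_fun_add (hPd x) (hQd x)]
    rfl
  -- Pass to `Module.End ℂ H`.
  set p : Module.End ℂ H := (P x : H →ₗ[ℂ] H) with hpdef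
  set q : Module.End ℂ H := (Q x : H →ₗ[ℂ] H) with hqdef
  set a : Module.End ℂ H := (fderiv ℝ P x u : H →ₗ[ℂ] H) with hadef
  set a' : Module.End ℂ H := (fderiv ℝ P x v : H →ₗ[ℂ] H) with ha'def
  set b : Module.End ℂ H := (fderiv ℝ Q x u : H →ₗ[ℂ] H) with hbdef
  set b' : Module.End ℂ H := (fderiv ℝ Q x v : H →ₗ[ℂ] H) with hb'def
  have cast2 : ∀ f g : H →L[ℂ] H,
      ((f ∘L g : H →L[ℂ] H) : H →ₗ[ℂ] H) = (f : H →ₗ[ℂ] H) * (g : H →ₗ[ℂ] H) := by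
    intro f g; rfl
  have hp : p * p = p := by
    exact congrArg ContinuousLinearMap.toLinearMap (hPproj x)
  have hq : q * q = q := by
    exact congrArg ContinuousLinearMap.toLinearMap (hQproj x)
  have hpq : p * q = 0 := by
    exact congrArg ContinuousLinearMap.toLinearMap (hPQ x)
  have hqp : q * p = 0 := by
    exact congrArg ContinuousLinearMap.toLinearMap (hQP x)
  have ha : a * p + p * a = a := by
    have := congrArg ContinuousLinearMap.toLinearMap (dPP u)
    simp only [ContinuousLinearMap.coe_add, cast2] at this
    rw [add_comm] at this; exact this
  have ha' : a' * p + p * a' = a' := by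
    have := congrArg ContinuousLinearMap.toLinearMap (dPP v)
    simp only [ContinuousLinearMap.coe_add, cast2] at this
    rw [add_comm] at this; exact this
  have hb : b * q + q * b = b := by
    have := congrArg ContinuousLinearMap.toLinearMap (dQQ u)
    simp only [ContinuousLinearMap.coe_add, cast2] at this
    rw [add_comm] at this; exact this
  have hb' : b' * q + q * b' = b' := by
    have := congrArg ContinuousLinearMap.toLinearMap (dQQ v)
    simp only [ContinuousLinearMap.coe_add, cast2] at this
    rw [add_comm] at this; exact this
  have h1 : a * q + p * b = 0 := by
    have := congrArg ContinuousLinearMap.toLinearMap (dPQ u)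
    simp only [ContinuousLinearMap.coe_add, ContinuousLinearMap.coe_zero, cast2] at this
    rw [add_comm] at this; exact this
  have h2 : a' * q + p * b' = 0 := by
    have := congrArg ContinuousLinearMap.toLinearMap (dPQ v)
    simp only [ContinuousLinearMap.coe_add, ContinuousLinearMap.coe_zero, cast2] at this
    rw [add_comm] at this; exact this
  have h3 : b * p + q * a = 0 := by
    have := congrArg ContinuousLinearMap.toLinearMap (dQP u)
    simp only [ContinuousLinearMap.coe_add, ContinuousLinearMap.coe_zero, cast2] at this
    rw [add_comm] at this; exact this
  have h4 : b' * p + q * a' = 0 := by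
    have := congrArg ContinuousLinearMap.toLinearMap (dQP v)
    simp only [ContinuousLinearMap.coe_add, ContinuousLinearMap.coe_zero, cast2] at this
    rw [add_comm] at this; exact this
  have key := cross_trace_key p q a a' b b' hp hpq hqp ha ha' hb hb' h1 h2 h3 h4
  rw [hF, hF, hF]
  have harg : ∀ w w' : E,
      ((((fun y => P y + Q y) x) ∘L (fderiv ℝ (fun y => P y + Q y) x w) ∘L
          (fderiv ℝ (fun y => P y + Q y) x w') : H →L[ℂ] H) : H →ₗ[ℂ] H)
        = ((P x + Q x : H →L[ℂ] H) : H →ₗ[ℂ] H) *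
            (((fderiv ℝ P x w + fderiv ℝ Q x w : H →L[ℂ] H)) : H →ₗ[ℂ] H) *
            (((fderiv ℝ P x w' + fderiv ℝ Q x w' : H →L[ℂ] H)) : H →ₗ[ℂ] H) := by
    intro w w'
    rw [show ((fun y => P y + Q y) x) = P x + Q x from rfl, dsum w, dsum w']
    rw [cast2, cast2, ← mul_assoc]
  simp only [harg, cast2, ContinuousLinearMap.coe_add, ← mul_assoc]
  linear_combination (-Complex.I) * key
end

section
/- Let P be a smooth family of orthogonal projections on a manifold X, let x₀ ∈ X, and let Φ₀ : ℂⁿ → H be an isometry with Φ₀ Φ₀* = P(x₀). Then there is an open neighborhood U of x₀ on which Φ(x) := P(x) Φ₀ ((P(x) Φ₀)* (P(x) Φ₀))^{−1/2} is well defined, smooth, and satisfies Φ(x)* Φ(x) = Id and Φ(x) Φ(x)* = P(x) for all x ∈ U. -/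
set_option maxHeartbeats 1000000
set_option synthInstance.maxHeartbeats 400000

open ContinuousLinearMap

noncomputable section

/-- Abbreviation for the algebra of operators on `ℂⁿ`. -/
private abbrev Bn (n : ℕ) : Type _ :=
  EuclideanSpace ℂ (Fin n) →L[ℂ] EuclideanSpace ℂ (Fin n)

/-- Composition of `ℂ`-linear continuous maps is a bounded `ℝ`-bilinear map. -/
private lemma comp_bilin {X Y Z : Type*} [NormedAddCommGroup X] [NormedSpace ℂ X]
    [NormedAddCommGroup Y] [NormedSpace ℂ Y] [NormedAddCommGroup Z] [NormedSpace ℂ Z] :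
    IsBoundedBilinearMap ℝ (fun p : (Y →L[ℂ] Z) × (X →L[ℂ] Y) => p.1.comp p.2) where
  add_left _ _ _ := by ext v; simp
  smul_left _ _ _ := by ext v; simp
  add_right _ _ _ := by ext v; simp
  smul_right _ _ _ := by ext v; simp
  bound := ⟨1, one_pos, fun f g => by simpa using ContinuousLinearMap.opNorm_comp_le f g⟩

/-- Near `1`, `CFC.sqrt` agrees with a smooth function and takes invertible values. -/
private lemma sqrt_local (n : ℕ) :
    ∃ (Ω : Set (Bn n)) (g : Bn n → Bn n),
      IsOpen Ω ∧ (1 : Bn n) ∈ Ω ∧ (∀ y ∈ Ω, ContDiffAt ℝ (⊤ : ℕ∞) g y) ∧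
      ∀ y ∈ Ω, 0 ≤ y → CFC.sqrt y = g y ∧ IsUnit (CFC.sqrt y) := by
  rcases subsingleton_or_nontrivial (EuclideanSpace ℂ (Fin n)) with hsub | hnt
  · haveI : Subsingleton (Bn n) :=
      ⟨fun f g => ContinuousLinearMap.ext fun v => Subsingleton.elim _ _⟩
    refine ⟨Set.univ, fun _ => 1, isOpen_univ, trivial, fun y _ => contDiffAt_const, ?_⟩
    intro y _ _
    exact ⟨Subsingleton.elim _ _, isUnit_of_subsingleton _⟩
  · set sq : Bn n → Bn n := fun S => S * S with hsqdef
    have hsq : ContDiff ℝ (⊤ : ℕ∞) sq := contDiff_id.mul contDiff_id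
    set D : Bn n → (Bn n →L[ℝ] Bn n) :=
      fun S => ContinuousLinearMap.mul ℝ (Bn n) S +
        (ContinuousLinearMap.mul ℝ (Bn n)).flip S with hDdef
    have hDder : ∀ S, HasFDerivAt sq (D S) S := by
      intro S
      have h := (hasFDerivAt_id (𝕜 := ℝ) S).mul' (hasFDerivAt_id S)
      exact h.congr_fderiv (by ext T; simp [hDdef])
    have hDcont : Continuous D :=
      ((ContinuousLinearMap.mul ℝ (Bn n)).continuous.add
        (ContinuousLinearMap.mul ℝ (Bn n)).flip.continuous)
    have hD1 : IsUnit (D 1) := by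
      refine ⟨⟨D 1, (2⁻¹ : ℝ) • ContinuousLinearMap.id ℝ (Bn n), ?_, ?_⟩, rfl⟩
      · refine ContinuousLinearMap.ext fun L => ?_
        rw [ContinuousLinearMap.mul_apply]
        simp only [hDdef, ContinuousLinearMap.add_apply, ContinuousLinearMap.smul_apply,
          ContinuousLinearMap.coe_id', id_eq, ContinuousLinearMap.flip_apply,
          ContinuousLinearMap.mul_apply', ContinuousLinearMap.one_apply]
        rw [one_mul, mul_one, ← two_smul ℝ, smul_smul]
        norm_num
      · refine ContinuousLinearMap.ext fun L => ?_
        rw [ContinuousLinearMap.mul_apply]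
        simp only [hDdef, ContinuousLinearMap.add_apply, ContinuousLinearMap.smul_apply,
          ContinuousLinearMap.coe_id', id_eq, ContinuousLinearMap.flip_apply,
          ContinuousLinearMap.mul_apply', ContinuousLinearMap.one_apply]
        rw [one_mul, mul_one, ← two_smul ℝ, smul_smul]
        norm_num
    have hcoeD1 : ((ContinuousLinearEquiv.ofUnit hD1.unit : Bn n ≃L[ℝ] Bn n) : Bn n →L[ℝ] Bn n)
        = D 1 := by
      rw [show ((ContinuousLinearEquiv.ofUnit hD1.unit : Bn n ≃L[ℝ] Bn n) : Bn n →L[ℝ] Bn n)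
        = (hD1.unit : Bn n →L[ℝ] Bn n) from rfl, hD1.unit_spec]
    have hD1' : HasFDerivAt sq
        ((ContinuousLinearEquiv.ofUnit hD1.unit : Bn n ≃L[ℝ] Bn n) : Bn n →L[ℝ] Bn n) 1 := by
      rw [hcoeD1]; exact hDder 1
    set phom := hsq.contDiffAt.toOpenPartialHomeomorph sq hD1' (by simp) with hphomdef
    have hcoe : ⇑phom = sq := ContDiffAt.toOpenPartialHomeomorph_coe _ _ _
    have hsq1 : sq 1 = 1 := by simp [hsqdef]
    have hsrc1 : (1 : Bn n) ∈ phom.source :=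
      ContDiffAt.mem_toOpenPartialHomeomorph_source _ _ _
    have htgt1 : (1 : Bn n) ∈ phom.target := by
      have h := ContDiffAt.image_mem_toOpenPartialHomeomorph_target hsq.contDiffAt hD1' (by simp)
      rwa [hsq1] at h
    set O : Set (Bn n) := phom.source ∩ (D ⁻¹' {u | IsUnit u}) ∩ (star ⁻¹' phom.source)
        ∩ {S | ‖S - 1‖ < 1} with hOdef
    have hOopen : IsOpen O := by
      refine IsOpen.inter (IsOpen.inter (IsOpen.inter phom.open_source ?_) ?_) ?_
      · exact (Units.isOpen (R := Bn n →L[ℝ] Bn n)).preimage hDcont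
      · have hstar_cont : Continuous (star : Bn n → Bn n) := by
          have heq : (star : Bn n → Bn n) = fun f => ContinuousLinearMap.adjoint f :=
            funext fun f => ContinuousLinearMap.star_eq_adjoint f
          rw [heq]
          exact (ContinuousLinearMap.adjoint (𝕜 := ℂ) (E := EuclideanSpace ℂ (Fin n))
            (F := EuclideanSpace ℂ (Fin n))).continuous
        exact phom.open_source.preimage hstar_cont
      · exact isOpen_lt (continuous_id.sub continuous_const).norm continuous_const
    have h1O : (1 : Bn n) ∈ O := by
      refine ⟨⟨⟨hsrc1, ?_⟩, ?_⟩, ?_⟩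
      · exact hD1
      · simpa using hsrc1
      · simp
    refine ⟨phom.target ∩ (phom.symm ⁻¹' O), phom.symm, ?_, ?_, ?_, ?_⟩
    · exact phom.continuousOn_symm.isOpen_inter_preimage phom.open_target hOopen
    · have hsymm1 : phom.symm 1 = 1 := by
        have h := phom.left_inv hsrc1
        rw [show ⇑phom = sq from hcoe, hsq1] at h
        exact h
      exact ⟨htgt1, by rw [Set.mem_preimage, hsymm1]; exact h1O⟩
    · rintro y ⟨hyt, hyO⟩
      obtain ⟨⟨⟨hs_src, hs_unit⟩, hs_star⟩, hs_norm⟩ := hyO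
      have hs_unit' : IsUnit (D (phom.symm y)) := hs_unit
      have hcoeu : ((ContinuousLinearEquiv.ofUnit hs_unit'.unit : Bn n ≃L[ℝ] Bn n) :
          Bn n →L[ℝ] Bn n) = D (phom.symm y) := by
        rw [show ((ContinuousLinearEquiv.ofUnit hs_unit'.unit : Bn n ≃L[ℝ] Bn n) :
          Bn n →L[ℝ] Bn n) = (hs_unit'.unit : Bn n →L[ℝ] Bn n) from rfl, hs_unit'.unit_spec]
      refine phom.contDiffAt_symm (f₀' := ContinuousLinearEquiv.ofUnit hs_unit'.unit) hyt ?_ ?_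
      · rw [show ⇑phom = sq from hcoe, hcoeu]
        exact hDder _
      · rw [show ⇑phom = sq from hcoe]
        exact hsq.contDiffAt
    · rintro y ⟨hyt, hyO⟩ hy0
      obtain ⟨⟨⟨hs_src, hs_unit⟩, hs_star⟩, hs_norm⟩ := hyO
      have hss : phom.symm y * phom.symm y = y := by
        have h := phom.right_inv hyt
        rwa [show ⇑phom = sq from hcoe] at h
      have hysa : star y = y := (IsSelfAdjoint.of_nonneg hy0)
      have hsa : star (phom.symm y) = phom.symm y := by
        have h1 : sq (star (phom.symm y)) = y := by
          show star (phom.symm y) * star (phom.symm y) = y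
          rw [← star_mul, hss, hysa]
        have h2 := phom.left_inv hs_star
        rw [show ⇑phom = sq from hcoe, h1] at h2
        exact h2.symm
      have hsnn : (0 : Bn n) ≤ phom.symm y := by
        have hsa' : IsSelfAdjoint (phom.symm y) := hsa
        rw [StarOrderedRing.nonneg_iff_spectrum_nonneg (R := ℝ) _ hsa']
        intro x hx
        have hmem : x - 1 ∈ spectrum ℝ (phom.symm y - algebraMap ℝ (Bn n) 1) := by
          rw [← spectrum.sub_singleton_eq]
          exact Set.sub_mem_sub hx rfl
        have hb := spectrum.norm_le_norm_of_mem hmem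
        have h3 : |x - 1| < 1 := by
          refine lt_of_le_of_lt ?_ hs_norm
          simpa [Real.norm_eq_abs] using hb
        rw [abs_lt] at h3
        linarith [h3.1]
      have hunit_s : IsUnit (phom.symm y) := by
        have h := isUnit_one_sub_of_norm_lt_one
          (x := (1 : Bn n) - phom.symm y) (by rwa [norm_sub_rev])
        simpa [sub_sub_cancel] using h
      have hsqrt : CFC.sqrt y = phom.symm y := CFC.sqrt_unique hss hsnn
      exact ⟨hsqrt, hsqrt ▸ hunit_s⟩

end

set_option maxHeartbeats 4000000 in
/-- Given a smooth family `P` of orthogonal projections and an isometry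
`Φ₀ : ℂⁿ → H` with `Φ₀ Φ₀* = P(x₀)`, on a sufficiently small neighbourhood `U` of `x₀`
the formula `Φ(x) = P(x) Φ₀ ((P(x)Φ₀)*(P(x)Φ₀))^{-1/2}` is well defined (the matrix
`(P(x)Φ₀)*(P(x)Φ₀)` is invertible), smooth, and gives a frame for `P`:
`Φ(x)*Φ(x) = 1` and `Φ(x)Φ(x)* = P(x)` for `x ∈ U`. -/
theorem local_frame_formula
    {E : Type*} [NormedAddCommGroup E] [NormedSpace ℝ E]
    {H : Type*} [NormedAddCommGroup H] [InnerProductSpace ℂ H] [FiniteDimensional ℂ H]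
    {n : ℕ} (P : E → (H →L[ℂ] H)) (hP : ContDiff ℝ (⊤ : ℕ∞) P)
    (hproj : ∀ x, (P x) ∘L (P x) = P x)
    (hsa : ∀ x, ContinuousLinearMap.adjoint (P x) = P x)
    (x₀ : E) (Φ₀ : EuclideanSpace ℂ (Fin n) →L[ℂ] H)
    (hΦ₀iso : (ContinuousLinearMap.adjoint Φ₀) ∘L Φ₀ = ContinuousLinearMap.id ℂ _)
    (hΦ₀P : Φ₀ ∘L (ContinuousLinearMap.adjoint Φ₀) = P x₀) :
    ∃ U : Set E, IsOpen U ∧ x₀ ∈ U ∧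
      (∀ x ∈ U, IsUnit
        ((ContinuousLinearMap.adjoint ((P x) ∘L Φ₀)) ∘L ((P x) ∘L Φ₀))) ∧
      ContDiffOn ℝ (⊤ : ℕ∞)
        (fun x => ((P x) ∘L Φ₀) ∘L
          Ring.inverse (CFC.sqrt
            ((ContinuousLinearMap.adjoint ((P x) ∘L Φ₀)) ∘L ((P x) ∘L Φ₀)))) U ∧
      (∀ x ∈ U,
        (ContinuousLinearMap.adjoint (((P x) ∘L Φ₀) ∘L
            Ring.inverse (CFC.sqrt
              ((ContinuousLinearMap.adjoint ((P x) ∘L Φ₀)) ∘L ((P x) ∘L Φ₀))))) ∘L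
          (((P x) ∘L Φ₀) ∘L
            Ring.inverse (CFC.sqrt
              ((ContinuousLinearMap.adjoint ((P x) ∘L Φ₀)) ∘L ((P x) ∘L Φ₀))))
          = ContinuousLinearMap.id ℂ _) ∧
      (∀ x ∈ U,
        (((P x) ∘L Φ₀) ∘L
            Ring.inverse (CFC.sqrt
              ((ContinuousLinearMap.adjoint ((P x) ∘L Φ₀)) ∘L ((P x) ∘L Φ₀)))) ∘L
          (ContinuousLinearMap.adjoint (((P x) ∘L Φ₀) ∘L
            Ring.inverse (CFC.sqrt
              ((ContinuousLinearMap.adjoint ((P x) ∘L Φ₀)) ∘L ((P x) ∘L Φ₀)))))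
          = P x) := by
  classical
  obtain ⟨Ω, g, hΩopen, hΩ1, hgsmooth, hkey⟩ := sqrt_local n
  let T : E → Bn n := fun x =>
    (ContinuousLinearMap.adjoint ((P x) ∘L Φ₀)) ∘L ((P x) ∘L Φ₀)
  have hproj' : ∀ x v, P x (P x v) = P x v := by
    intro x v
    have h := DFunLike.congr_fun (hproj x) v
    simpa using h
  have hadjA : ∀ x, ContinuousLinearMap.adjoint ((P x) ∘L Φ₀)
      = (ContinuousLinearMap.adjoint Φ₀) ∘L (P x) := by
    intro x
    rw [ContinuousLinearMap.adjoint_comp, hsa]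
  have hTnn : ∀ x, (0 : Bn n) ≤ T x := by
    intro x
    rw [ContinuousLinearMap.nonneg_iff_isPositive]
    have h := (ContinuousLinearMap.isPositive_one (E := H) (𝕜 := ℂ)).adjoint_conj
      ((P x) ∘L Φ₀)
    rw [ContinuousLinearMap.one_def, ContinuousLinearMap.id_comp] at h
    exact h
  have hTx₀ : T x₀ = 1 := by
    have hAx₀ : (P x₀) ∘L Φ₀ = Φ₀ := by
      rw [← hΦ₀P, ContinuousLinearMap.comp_assoc, hΦ₀iso, ContinuousLinearMap.comp_id]
    show (ContinuousLinearMap.adjoint ((P x₀) ∘L Φ₀)) ∘L ((P x₀) ∘L Φ₀) = 1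
    rw [hAx₀, hΦ₀iso]
    rfl
  have hAsmooth : ContDiff ℝ (⊤ : ℕ∞) (fun x => (P x) ∘L Φ₀) :=
    comp_bilin.contDiff.comp (g := fun p : (H →L[ℂ] H) × (EuclideanSpace ℂ (Fin n) →L[ℂ] H) => p.1.comp p.2) (hP.prodMk contDiff_const)
  have hAadj_smooth : ContDiff ℝ (⊤ : ℕ∞)
      (fun x => ContinuousLinearMap.adjoint ((P x) ∘L Φ₀)) := by
    have h1 : ContDiff ℝ (⊤ : ℕ∞) (fun x => (ContinuousLinearMap.adjoint Φ₀) ∘L (P x)) :=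
      comp_bilin.contDiff.comp (g := fun p : (H →L[ℂ] EuclideanSpace ℂ (Fin n)) × (H →L[ℂ] H) => p.1.comp p.2) (contDiff_const.prodMk hP)
    have h2 : (fun x => ContinuousLinearMap.adjoint ((P x) ∘L Φ₀))
        = fun x => (ContinuousLinearMap.adjoint Φ₀) ∘L (P x) := funext hadjA
    rw [h2]
    exact h1
  have hTsmooth : ContDiff ℝ (⊤ : ℕ∞) T :=
    comp_bilin.contDiff.comp (g := fun p : (H →L[ℂ] EuclideanSpace ℂ (Fin n)) × (EuclideanSpace ℂ (Fin n) →L[ℂ] H) => p.1.comp p.2) (hAadj_smooth.prodMk hAsmooth)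
  set U : Set E := (T ⁻¹' Ω) ∩ {x | ‖P x - P x₀‖ < 1} with hUdef
  have hUopen : IsOpen U :=
    (hΩopen.preimage hTsmooth.continuous).inter
      (isOpen_lt ((hP.continuous.sub continuous_const).norm) continuous_const)
  have hx₀U : x₀ ∈ U := by
    constructor
    · show T x₀ ∈ Ω
      rw [hTx₀]; exact hΩ1
    · show ‖P x₀ - P x₀‖ < 1
      simp
  have hmain : ∀ x ∈ U,
      CFC.sqrt ((ContinuousLinearMap.adjoint ((P x) ∘L Φ₀)) ∘L ((P x) ∘L Φ₀))
        = g ((ContinuousLinearMap.adjoint ((P x) ∘L Φ₀)) ∘L ((P x) ∘L Φ₀)) ∧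
      IsUnit (CFC.sqrt ((ContinuousLinearMap.adjoint ((P x) ∘L Φ₀)) ∘L ((P x) ∘L Φ₀))) :=
    fun x hx => hkey _ hx.1 (hTnn x)
  refine ⟨U, hUopen, hx₀U, ?_, ?_, ?_, ?_⟩
  · -- invertibility
    intro x hx
    obtain ⟨-, hsu⟩ := hmain x hx
    have hss := CFC.sqrt_mul_sqrt_self
      ((ContinuousLinearMap.adjoint ((P x) ∘L Φ₀)) ∘L ((P x) ∘L Φ₀)) (hTnn x)
    rw [← hss]
    exact hsu.mul hsu
  · -- smoothness
    intro x hx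
    apply ContDiffAt.contDiffWithinAt
    obtain ⟨heq, hsu⟩ := hmain x hx
    have hgT : ContDiffAt ℝ (⊤ : ℕ∞) (fun x' => g (T x')) x :=
      (hgsmooth _ hx.1).comp x hTsmooth.contDiffAt
    have hu : IsUnit (g (T x)) := heq ▸ hsu
    have hinv : ContDiffAt ℝ (⊤ : ℕ∞) (fun x' => Ring.inverse (g (T x'))) x := by
      have h : ContDiffAt ℝ (⊤ : ℕ∞) Ring.inverse ((hu.unit : (Bn n)ˣ) : Bn n) :=
        contDiffAt_ringInverse ℝ hu.unit
      rw [hu.unit_spec] at h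
      exact h.comp x hgT
    have hF : ContDiffAt ℝ (⊤ : ℕ∞)
        (fun x' => ((P x') ∘L Φ₀) ∘L Ring.inverse (g (T x'))) x :=
      comp_bilin.contDiff.comp₂_contDiffAt hAsmooth.contDiffAt hinv
    refine hF.congr_of_eventuallyEq ?_
    filter_upwards [hUopen.mem_nhds hx] with x' hx'
    rw [(hmain x' hx').1]
  · -- isometry identity
    intro x hx
    obtain ⟨-, hsu⟩ := hmain x hx
    have hss := CFC.sqrt_mul_sqrt_self
      ((ContinuousLinearMap.adjoint ((P x) ∘L Φ₀)) ∘L ((P x) ∘L Φ₀)) (hTnn x)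
    have hsnn := CFC.sqrt_nonneg
      (a := (ContinuousLinearMap.adjoint ((P x) ∘L Φ₀)) ∘L ((P x) ∘L Φ₀))
    set s : Bn n :=
      CFC.sqrt ((ContinuousLinearMap.adjoint ((P x) ∘L Φ₀)) ∘L ((P x) ∘L Φ₀)) with hsdef
    set r : Bn n := Ring.inverse s with hrdef
    have hrs : r * s = 1 := Ring.inverse_mul_cancel _ hsu
    have hsr : s * r = 1 := Ring.mul_inverse_cancel _ hsu
    have hs_sa : star s = s := IsSelfAdjoint.of_nonneg hsnn
    have hr_sa : star r = r := by rw [hrdef, ← Ring.inverse_star, hs_sa]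
    have hr_adj : ContinuousLinearMap.adjoint r = r := by
      rw [← ContinuousLinearMap.star_eq_adjoint, hr_sa]
    rw [ContinuousLinearMap.adjoint_comp, hr_adj, ContinuousLinearMap.comp_assoc,
      ← ContinuousLinearMap.comp_assoc (ContinuousLinearMap.adjoint ((P x) ∘L Φ₀))
        ((P x) ∘L Φ₀) r,
      ← ContinuousLinearMap.mul_def
        ((ContinuousLinearMap.adjoint ((P x) ∘L Φ₀)) ∘L ((P x) ∘L Φ₀)) r,
      ← ContinuousLinearMap.mul_def r, ← ContinuousLinearMap.one_def,
      ← hss, mul_assoc s s r, hsr, mul_one, hrs]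
  · -- projection identity
    intro x hx
    obtain ⟨-, hsu⟩ := hmain x hx
    have hss := CFC.sqrt_mul_sqrt_self
      ((ContinuousLinearMap.adjoint ((P x) ∘L Φ₀)) ∘L ((P x) ∘L Φ₀)) (hTnn x)
    have hsnn := CFC.sqrt_nonneg
      (a := (ContinuousLinearMap.adjoint ((P x) ∘L Φ₀)) ∘L ((P x) ∘L Φ₀))
    set s : Bn n :=
      CFC.sqrt ((ContinuousLinearMap.adjoint ((P x) ∘L Φ₀)) ∘L ((P x) ∘L Φ₀)) with hsdef
    set r : Bn n := Ring.inverse s with hrdef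
    have hrs : r * s = 1 := Ring.inverse_mul_cancel _ hsu
    have hsr : s * r = 1 := Ring.mul_inverse_cancel _ hsu
    have hs_sa : star s = s := IsSelfAdjoint.of_nonneg hsnn
    have hr_sa : star r = r := by rw [hrdef, ← Ring.inverse_star, hs_sa]
    have hr_adj : ContinuousLinearMap.adjoint r = r := by
      rw [← ContinuousLinearMap.star_eq_adjoint, hr_sa]
    -- abbreviations
    have hATΦ : (ContinuousLinearMap.adjoint ((P x) ∘L Φ₀)) ∘L Φ₀
        = (ContinuousLinearMap.adjoint ((P x) ∘L Φ₀)) ∘L ((P x) ∘L Φ₀) := by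
      refine ContinuousLinearMap.ext fun v => ?_
      show ContinuousLinearMap.adjoint ((P x) ∘L Φ₀) (Φ₀ v)
          = ContinuousLinearMap.adjoint ((P x) ∘L Φ₀) (((P x) ∘L Φ₀) v)
      rw [hadjA x]
      show ContinuousLinearMap.adjoint Φ₀ (P x (Φ₀ v))
          = ContinuousLinearMap.adjoint Φ₀ (P x (P x (Φ₀ v)))
      rw [hproj' x]
    have hadjP : (ContinuousLinearMap.adjoint ((P x) ∘L Φ₀)) ∘L (P x)
        = ContinuousLinearMap.adjoint ((P x) ∘L Φ₀) := by
      refine ContinuousLinearMap.ext fun v => ?_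
      show ContinuousLinearMap.adjoint ((P x) ∘L Φ₀) (P x v)
          = ContinuousLinearMap.adjoint ((P x) ∘L Φ₀) v
      rw [hadjA x]
      show ContinuousLinearMap.adjoint Φ₀ (P x (P x v))
          = ContinuousLinearMap.adjoint Φ₀ (P x v)
      rw [hproj' x]
    have hone : r ∘L (r ∘L ((ContinuousLinearMap.adjoint ((P x) ∘L Φ₀))
        ∘L ((P x) ∘L Φ₀))) = (1 : Bn n) := by
      rw [← ContinuousLinearMap.mul_def r, ← ContinuousLinearMap.mul_def r]
      rw [← hss, ← mul_assoc r s s, hrs, one_mul, hrs]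
    have hd : (((P x) ∘L Φ₀) ∘L (r ∘L (r ∘L
        ContinuousLinearMap.adjoint ((P x) ∘L Φ₀)))) ∘L Φ₀ = (P x) ∘L Φ₀ := by
      rw [ContinuousLinearMap.comp_assoc ((P x) ∘L Φ₀) _ Φ₀,
        ContinuousLinearMap.comp_assoc r _ Φ₀, ContinuousLinearMap.comp_assoc r _ Φ₀,
        hATΦ, hone, ContinuousLinearMap.one_def, ContinuousLinearMap.comp_id]
    have hqP : (((P x) ∘L Φ₀) ∘L (r ∘L (r ∘L
        ContinuousLinearMap.adjoint ((P x) ∘L Φ₀)))) ∘L (P x)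
        = ((P x) ∘L Φ₀) ∘L (r ∘L (r ∘L ContinuousLinearMap.adjoint ((P x) ∘L Φ₀))) := by
      rw [ContinuousLinearMap.comp_assoc ((P x) ∘L Φ₀) _ (P x),
        ContinuousLinearMap.comp_assoc r _ (P x), ContinuousLinearMap.comp_assoc r _ (P x),
        hadjP]
    have hQP₀ : (((P x) ∘L Φ₀) ∘L (r ∘L (r ∘L
        ContinuousLinearMap.adjoint ((P x) ∘L Φ₀)))) ∘L (P x₀)
        = ((P x) ∘L Φ₀) ∘L (ContinuousLinearMap.adjoint Φ₀) := by
      rw [← hΦ₀P, ← ContinuousLinearMap.comp_assoc, hd]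
    have hPP₀ : (P x) ∘L (P x₀) = ((P x) ∘L Φ₀) ∘L (ContinuousLinearMap.adjoint Φ₀) := by
      rw [← hΦ₀P, ← ContinuousLinearMap.comp_assoc]
    have hR0 : ((P x) - (((P x) ∘L Φ₀) ∘L (r ∘L (r ∘L
        ContinuousLinearMap.adjoint ((P x) ∘L Φ₀))))) ∘L (P x₀) = 0 := by
      rw [ContinuousLinearMap.sub_comp, hQP₀, hPP₀, sub_self]
    have hRP : ((P x) - (((P x) ∘L Φ₀) ∘L (r ∘L (r ∘L
        ContinuousLinearMap.adjoint ((P x) ∘L Φ₀))))) ∘L (P x)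
        = (P x) - (((P x) ∘L Φ₀) ∘L (r ∘L (r ∘L
          ContinuousLinearMap.adjoint ((P x) ∘L Φ₀)))) := by
      rw [ContinuousLinearMap.sub_comp, hproj x, hqP]
    have hRm : (P x) - (((P x) ∘L Φ₀) ∘L (r ∘L (r ∘L
        ContinuousLinearMap.adjoint ((P x) ∘L Φ₀))))
        = ((P x) - (((P x) ∘L Φ₀) ∘L (r ∘L (r ∘L
          ContinuousLinearMap.adjoint ((P x) ∘L Φ₀))))) ∘L ((P x) - (P x₀)) := by
      rw [ContinuousLinearMap.comp_sub, hRP, hR0, sub_zero]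
    have h1 : ‖(P x) - (P x₀)‖ < 1 := hx.2
    have hnorm : ‖(P x) - (((P x) ∘L Φ₀) ∘L (r ∘L (r ∘L
        ContinuousLinearMap.adjoint ((P x) ∘L Φ₀))))‖
        ≤ ‖(P x) - (((P x) ∘L Φ₀) ∘L (r ∘L (r ∘L
          ContinuousLinearMap.adjoint ((P x) ∘L Φ₀))))‖ * ‖(P x) - (P x₀)‖ := by
      conv_lhs => rw [hRm]
      exact ContinuousLinearMap.opNorm_comp_le _ _
    have hzero : (P x) - (((P x) ∘L Φ₀) ∘L (r ∘L (r ∘L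
        ContinuousLinearMap.adjoint ((P x) ∘L Φ₀)))) = 0 := by
      by_contra hne
      have hpos : 0 < ‖(P x) - (((P x) ∘L Φ₀) ∘L (r ∘L (r ∘L
          ContinuousLinearMap.adjoint ((P x) ∘L Φ₀))))‖ := norm_pos_iff.mpr hne
      nlinarith
    have hfin : ((P x) ∘L Φ₀) ∘L (r ∘L (r ∘L
        ContinuousLinearMap.adjoint ((P x) ∘L Φ₀))) = P x :=
      (sub_eq_zero.mp hzero).symm
    rw [ContinuousLinearMap.adjoint_comp, hr_adj, ContinuousLinearMap.comp_assoc]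
    exact hfin
end

section
/- Let P̃ : (−ε, ε) → M_N(ℂ) be an analytic family of orthogonal projections of the form P̃(k) = P̃₀ + Σ_{j≥1} P̃_j k^j, satisfying P̃(k) e₁ = e₁ for all k < 0 and P̃(k) e₂ = e₂ for all k > 0, where e₁, e₂ are the first two standard basis vectors. Suppose P̃₀ is the orthogonal projection onto span(e₁, e₂). Then P̃(k) = P̃₀ for all k ∈ (−ε, ε). -/
open ContinuousLinearMap Set
open Filter Topology

/-! Analyticity and the identity theorem upgrade `P̃(k)e₁ = e₁` (for `k < 0`) and `P̃(k)e₂ = e₂`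
(for `k > 0`) to all `k`, so `P̃(k)` fixes the range of `P̃₀`, i.e. `P̃(k)P̃₀ = P̃₀`. Hence
`P̃(k) - P̃₀` is an orthogonal projection. It tends to `0` as `k → 0`, and an idempotent of norm
`< 1` vanishes, so `P̃ = P̃₀` near `0`, and by the identity theorem on all of `(-ε, ε)`. -/

theorem hasFPowerSeriesOnBall_of_hasSum_pow_smul {E : Type*} [NormedAddCommGroup E]
    [NormedSpace ℝ E] {ε : ℝ} (hε : 0 < ε) {f : ℝ → E} {A : ℕ → E}
    (hsum : ∀ k ∈ Ioo (-ε) ε, HasSum (fun j : ℕ => k ^ j • A j) (f k)) :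
    HasFPowerSeriesOnBall f (fun n => ContinuousMultilinearMap.mkPiRing ℝ (Fin n) (A n)) 0
      (ENNReal.ofReal ε) where
  r_le := by
    refine ENNReal.le_of_forall_nnreal_lt fun r hr => ?_
    have hrε : (r : ℝ) < ε := by
      rwa [← ENNReal.ofReal_coe_nnreal, ENNReal.ofReal_lt_ofReal_iff hε] at hr
    refine FormalMultilinearSeries.le_radius_of_tendsto _ (l := 0) ?_
    simpa [ContinuousMultilinearMap.norm_mkPiRing, norm_smul, mul_comm] using
      (hsum r ⟨by linarith [r.coe_nonneg], hrε⟩).summable.tendsto_atTop_zero.norm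
  r_pos := by simpa using hε
  hasSum {y} hy := by
    rw [Metric.eball_ofReal, Real.ball_zero_eq_Ioo] at hy
    simpa [ContinuousMultilinearMap.mkPiRing_apply] using hsum y hy

theorem analyticOnNhd_of_hasSum_pow_smul {E : Type*} [NormedAddCommGroup E]
    [NormedSpace ℝ E] [CompleteSpace E] {ε : ℝ} {f : ℝ → E} {A : ℕ → E}
    (hsum : ∀ k ∈ Ioo (-ε) ε, HasSum (fun j : ℕ => k ^ j • A j) (f k)) :
    AnalyticOnNhd ℝ f (Ioo (-ε) ε) := by
  rcases le_or_gt ε 0 with hε | hε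
  · simp [Ioo_eq_empty (by linarith : ¬ -ε < ε)]
  simpa [Metric.eball_ofReal, Real.ball_zero_eq_Ioo] using
    (hasFPowerSeriesOnBall_of_hasSum_pow_smul hε hsum).analyticOnNhd

theorem AnalyticOnNhd.eqOn_of_preconnected_of_eqOn_open {𝕜 E F : Type*}
    [NontriviallyNormedField 𝕜] [NormedAddCommGroup E] [NormedSpace 𝕜 E]
    [NormedAddCommGroup F] [NormedSpace 𝕜 F] {f g : E → F} {U V : Set E}
    (hf : AnalyticOnNhd 𝕜 f U) (hg : AnalyticOnNhd 𝕜 g U) (hU : IsPreconnected U)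
    (hV : IsOpen V) (hVne : V.Nonempty) (hVU : V ⊆ U) (hfg : EqOn f g V) : EqOn f g U := by
  obtain ⟨x, hx⟩ := hVne
  exact hf.eqOn_of_preconnected_of_eventuallyEq hg hU (hVU hx)
    (eventually_of_mem (hV.mem_nhds hx) hfg)

theorem IsIdempotentElem.eq_zero_of_norm_lt_one {R : Type*} [NonUnitalNormedRing R] {q : R}
    (hq : IsIdempotentElem q) (h : ‖q‖ < 1) : q = 0 := by
  have : ‖q‖ ≤ ‖q‖ * ‖q‖ := by simpa only [hq.eq] using norm_mul_le q q
  exact norm_eq_zero.mp (by nlinarith [norm_nonneg q])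

theorem Filter.Tendsto.eventually_eq_zero_of_isIdempotentElem {α R : Type*}
    [NonUnitalNormedRing R] {l : Filter α} {f : α → R} (hf : Tendsto f l (𝓝 0))
    (hidem : ∀ᶠ x in l, IsIdempotentElem (f x)) : ∀ᶠ x in l, f x = 0 := by
  filter_upwards [hidem, (by simpa using hf.norm : Tendsto (‖f ·‖) l (𝓝 0)).eventually_lt_const
    one_pos] with x hx hx'
  exact hx.eq_zero_of_norm_lt_one hx'

theorem ContinuousLinearMap.comp_starProjection_of_apply_eq_self {𝕜 E : Type*} [RCLike 𝕜]
    [NormedAddCommGroup E] [InnerProductSpace 𝕜 E] {T : E →L[𝕜] E} {U : Submodule 𝕜 E}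
    [U.HasOrthogonalProjection] (hT : ∀ z ∈ U, T z = z) :
    T ∘L U.starProjection = U.starProjection :=
  ext fun x => hT _ (U.starProjection_apply_mem x)

/-- An analytic family `P̃(k) = Σ_j P̃_j k^j` of orthogonal projections
on `(−ε, ε)` with `P̃(k)e₁ = e₁` for `k < 0`, `P̃(k)e₂ = e₂` for `k > 0`, and `P̃₀` the
orthogonal projection onto `span(e₁, e₂)`, is constant: `P̃(k) = P̃₀` on `(−ε, ε)`. -/
theorem analytic_projection_family_is_constant
    {N : ℕ} (ε : ℝ) (hε : 0 < ε)
    (Pt : ℝ → (EuclideanSpace ℂ (Fin N) →L[ℂ] EuclideanSpace ℂ (Fin N)))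
    (A : ℕ → (EuclideanSpace ℂ (Fin N) →L[ℂ] EuclideanSpace ℂ (Fin N)))
    (hsum : ∀ k ∈ Ioo (-ε) ε, HasSum (fun j : ℕ => k ^ j • A j) (Pt k))
    (hproj : ∀ k ∈ Ioo (-ε) ε, (Pt k) ∘L (Pt k) = Pt k)
    (hsa : ∀ k ∈ Ioo (-ε) ε, ContinuousLinearMap.adjoint (Pt k) = Pt k)
    (e₁ e₂ : EuclideanSpace ℂ (Fin N))
    (h1 : ∀ k ∈ Ioo (-ε) (0:ℝ), Pt k e₁ = e₁)
    (h2 : ∀ k ∈ Ioo (0:ℝ) ε, Pt k e₂ = e₂)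
    (hA0 : A 0 = (Submodule.span ℂ {e₁, e₂}).subtypeL ∘L
        Submodule.orthogonalProjectionOnto (Submodule.span ℂ {e₁, e₂})) :
    ∀ k ∈ Ioo (-ε) ε, Pt k = A 0 := by
  set U := Submodule.span ℂ {e₁, e₂}
  have h0 : (0 : ℝ) ∈ Ioo (-ε) ε := ⟨by linarith, hε⟩
  have hPt : AnalyticOnNhd ℝ Pt (Ioo (-ε) ε) := analyticOnNhd_of_hasSum_pow_smul hsum
  have hfix (v : EuclideanSpace ℂ (Fin N)) {a b : ℝ} (hab : a < b)
      (hsub : Ioo a b ⊆ Ioo (-ε) ε) (hv : ∀ k ∈ Ioo a b, Pt k v = v) :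
      ∀ k ∈ Ioo (-ε) ε, Pt k v = v := by
    have hPtv : AnalyticOnNhd ℝ (Pt · v) (Ioo (-ε) ε) :=
      ((apply ℂ (EuclideanSpace ℂ (Fin N)) v).restrictScalars ℝ).comp_analyticOnNhd hPt
    exact hPtv.eqOn_of_preconnected_of_eqOn_open analyticOnNhd_const isPreconnected_Ioo
      isOpen_Ioo (nonempty_Ioo.2 hab) hsub hv
  have hfixU (k : ℝ) (hk : k ∈ Ioo (-ε) ε) (z : EuclideanSpace ℂ (Fin N)) (hz : z ∈ U) :
      Pt k z = z := by
    refine LinearMap.eqOn_span (f := (Pt k : _ →ₗ[ℂ] _)) (g := LinearMap.id) ?_ hz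
    rintro v (rfl | rfl)
    · exact hfix _ (by linarith) (Ioo_subset_Ioo_right hε.le) h1 k hk
    · exact hfix _ hε (Ioo_subset_Ioo_left (by linarith)) h2 k hk
  have hdiff (k : ℝ) (hk : k ∈ Ioo (-ε) ε) : IsStarProjection (Pt k - A 0) := by
    rw [hA0]
    exact isStarProjection_starProjection.sub_of_mul_eq_right
      { isIdempotentElem := hproj k hk, isSelfAdjoint := hsa k hk }
      (comp_starProjection_of_apply_eq_self (hfixU k hk))
  have hPt0 : Pt 0 = A 0 := (hsum 0 h0).unique <| by
    simpa using hasSum_single (f := fun j : ℕ => (0 : ℝ) ^ j • A j) 0 fun j hj => by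
      rw [zero_pow hj]; exact zero_smul ℝ (A j)
  have hnear : Pt =ᶠ[𝓝 0] fun _ => A 0 := by
    have hlim : Tendsto (fun k => Pt k - A 0) (𝓝 0) (𝓝 0) := by
      simpa [hPt0] using (hPt 0 h0).continuousAt.tendsto.sub_const (A 0)
    filter_upwards [hlim.eventually_eq_zero_of_isIdempotentElem (eventually_of_mem
      (isOpen_Ioo.mem_nhds h0) fun k hk => (hdiff k hk).isIdempotentElem)] with k hk
    exact sub_eq_zero.mp hk
  exact hPt.eqOn_of_preconnected_of_eventuallyEq analyticOnNhd_const isPreconnected_Ioo h0 hnear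
end

section
/- Let θ be an antiunitary involution on a finite-dimensional Hilbert space H, and let p : X → (H →L[ℂ] H) be a smooth family of orthogonal projections on a manifold X equipped with a smooth involution S : X → X, satisfying the time-reversal covariance p(S(x)) = θ p(x) θ⁻¹. Then the Berry curvature F[p] = −i Tr(p dp ∧ dp) satisfies S* F[p] = −F[p], i.e. the pullback of F[p] under S is −F[p]. -/
set_option maxHeartbeats 1000000

open ContinuousLinearMap


section BerryAux
variable {H : Type*} [NormedAddCommGroup H] [InnerProductSpace ℂ H] [FiniteDimensional ℂ H]
set_option linter.unusedSectionVars false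

lemma aux_trace_onb {ι : Type*} [Fintype ι] [DecidableEq ι] (b : OrthonormalBasis ι ℂ H)
    (A : H →ₗ[ℂ] H) :
    LinearMap.trace ℂ H A = ∑ i, (inner ℂ (b i) (A (b i)) : ℂ) := by
  rw [LinearMap.trace_eq_matrix_trace ℂ b.toBasis, Matrix.trace]
  refine Finset.sum_congr rfl fun i _ => ?_
  rw [Matrix.diag_apply, LinearMap.toMatrix_apply, OrthonormalBasis.coe_toBasis,
    OrthonormalBasis.coe_toBasis_repr_apply, OrthonormalBasis.repr_apply_apply]

lemma aux_trace_adjoint (M : H →L[ℂ] H) :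
    LinearMap.trace ℂ H ↑(ContinuousLinearMap.adjoint M) =
      starRingEnd ℂ (LinearMap.trace ℂ H ↑M) := by
  classical
  let b := stdOrthonormalBasis ℂ H
  rw [aux_trace_onb b, aux_trace_onb b, map_sum]
  refine Finset.sum_congr rfl fun i _ => ?_
  rw [ContinuousLinearMap.coe_coe, ContinuousLinearMap.coe_coe,
    ContinuousLinearMap.adjoint_inner_right, inner_conj_symm]

lemma aux_trace_theta (θ : H → H)
    (hadd : ∀ u v, θ (u + v) = θ u + θ v)
    (hsmul : ∀ (c : ℂ) (u : H), θ (c • u) = (starRingEnd ℂ c) • θ u)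
    (hinner : ∀ u v, inner ℂ (θ u) (θ v) = (inner ℂ v u : ℂ))
    (hinv : ∀ u, θ (θ u) = u)
    (M N : H →L[ℂ] H) (hMN : ∀ u, N u = θ (M (θ u))) :
    LinearMap.trace ℂ H ↑N = starRingEnd ℂ (LinearMap.trace ℂ H ↑M) := by
  classical
  have hzero : θ 0 = 0 := by
    have h := hadd 0 0
    rw [add_zero] at h
    exact left_eq_add.mp h
  let b := stdOrthonormalBasis ℂ H
  have horth : Orthonormal ℂ (fun i => θ (b i)) := by
    rw [orthonormal_iff_ite]
    intro i j
    rw [hinner]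
    have := orthonormal_iff_ite.mp b.orthonormal j i
    rw [this]
    simp [eq_comm]
  have hspan : ⊤ ≤ Submodule.span ℂ (Set.range fun i => θ (b i)) := by
    intro v _
    have hv : v = θ (θ v) := (hinv v).symm
    rw [hv]
    have hw : θ v ∈ Submodule.span ℂ (Set.range b) := by
      have := b.toBasis.span_eq
      rw [OrthonormalBasis.coe_toBasis] at this
      rw [this]
      exact Submodule.mem_top
    refine Submodule.span_induction ?_ ?_ ?_ ?_ hw
    · rintro x ⟨i, rfl⟩
      exact Submodule.subset_span ⟨i, rfl⟩
    · rw [hzero]; exact Submodule.zero_mem _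
    · intro x y _ _ hx hy
      rw [hadd]; exact Submodule.add_mem _ hx hy
    · intro c x _ hx
      rw [hsmul]; exact Submodule.smul_mem _ _ hx
  let b' : OrthonormalBasis _ ℂ H := OrthonormalBasis.mk horth hspan
  rw [aux_trace_onb b' N, aux_trace_onb b M, map_sum]
  refine Finset.sum_congr rfl fun i _ => ?_
  have hb' : ∀ i, b' i = θ (b i) := fun i => congrFun (OrthonormalBasis.coe_mk horth hspan) i
  rw [ContinuousLinearMap.coe_coe, ContinuousLinearMap.coe_coe, hb', hMN, hinv, hinner,
    inner_conj_symm]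

lemma aux_exists_Theta (θ : H → H)
    (hadd : ∀ u v, θ (u + v) = θ u + θ v)
    (hsmul : ∀ (c : ℂ) (u : H), θ (c • u) = (starRingEnd ℂ c) • θ u)
    (hnorm : ∀ u, ‖θ u‖ = ‖u‖) :
    ∃ Θ : (H →L[ℂ] H) →L[ℝ] (H →L[ℂ] H), ∀ A u, Θ A u = θ (A (θ u)) := by
  have hRsmul : ∀ (r : ℝ) (v : H), θ (r • v) = r • θ v := by
    intro r v
    rw [show (r • v : H) = (r : ℂ) • v by simp, hsmul]
    simp
  let conjA : (H →L[ℂ] H) → (H →L[ℂ] H) := fun A =>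
    LinearMap.mkContinuous
      { toFun := fun u => θ (A (θ u))
        map_add' := fun u v => by
          show θ (A (θ (u + v))) = θ (A (θ u)) + θ (A (θ v))
          rw [hadd, map_add, hadd]
        map_smul' := fun c u => by
          show θ (A (θ (c • u))) = c • θ (A (θ u))
          rw [hsmul, map_smul, hsmul]
          simp }
      ‖A‖ (fun u => by
        show ‖θ (A (θ u))‖ ≤ ‖A‖ * ‖u‖
        rw [hnorm]
        calc ‖A (θ u)‖ ≤ ‖A‖ * ‖θ u‖ := A.le_opNorm _
        _ = ‖A‖ * ‖u‖ := by rw [hnorm])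
  have hconjA : ∀ A u, conjA A u = θ (A (θ u)) := fun A u => rfl
  refine ⟨LinearMap.mkContinuous
    { toFun := conjA
      map_add' := fun A B => by
        ext u; simp [hconjA, hadd]
      map_smul' := fun r A => by
        ext u
        rw [RingHom.id_apply]
        simp only [hconjA, ContinuousLinearMap.smul_apply, hRsmul] }
    1 (fun A => by
      rw [one_mul]
      show ‖conjA A‖ ≤ ‖A‖
      exact LinearMap.mkContinuous_norm_le _ (norm_nonneg A) _), fun A u => rfl⟩

lemma aux_exists_adjR :
    ∃ Φ : (H →L[ℂ] H) →L[ℝ] (H →L[ℂ] H),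
      ∀ A : H →L[ℂ] H, Φ A = ContinuousLinearMap.adjoint A := by
  refine ⟨LinearMap.mkContinuous
    { toFun := fun A => ContinuousLinearMap.adjoint A
      map_add' := fun A B => by simp [map_add]
      map_smul' := fun r A => by
        show ContinuousLinearMap.adjoint (r • A) = r • ContinuousLinearMap.adjoint A
        rw [show (r • A : H →L[ℂ] H) = (r : ℂ) • A by simp,
          show (r • (ContinuousLinearMap.adjoint A) : H →L[ℂ] H)
            = (r : ℂ) • ContinuousLinearMap.adjoint A by simp]
        rw [← ContinuousLinearMap.star_eq_adjoint, ← ContinuousLinearMap.star_eq_adjoint,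
          star_smul]
        simp }
    1 (fun A => by
      rw [one_mul]
      show ‖ContinuousLinearMap.adjoint A‖ ≤ ‖A‖
      rw [← ContinuousLinearMap.star_eq_adjoint]
      exact le_of_eq (norm_star A)), fun A => rfl⟩

end BerryAux

/-- Let `θ` be an antiunitary involution on a finite-dimensional
complex Hilbert space, `S` a smooth involution of the parameter space, and `p` a smooth
family of orthogonal projections satisfying time-reversal covariance
`p(S(x)) = θ p(x) θ⁻¹`. Then the Berry curvature `F[p] = −i Tr(p dp ∧ dp)` satisfies
`S* F[p] = −F[p]`: its pullback under `S` is its negative. -/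
theorem berry_curvature_odd_under_TRS
    {E : Type*} [NormedAddCommGroup E] [NormedSpace ℝ E]
    {H : Type*} [NormedAddCommGroup H] [InnerProductSpace ℂ H] [FiniteDimensional ℂ H]
    (θ : H → H)
    (hadd : ∀ u v, θ (u + v) = θ u + θ v)
    (hsmul : ∀ (c : ℂ) (u : H), θ (c • u) = (starRingEnd ℂ c) • θ u)
    (hinner : ∀ u v, inner ℂ (θ u) (θ v) = (inner ℂ v u : ℂ))
    (hinv : ∀ u, θ (θ u) = u)
    (S : E → E) (hS : ContDiff ℝ (⊤ : ℕ∞) S) (hSinv : ∀ x, S (S x) = x)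
    (p : E → (H →L[ℂ] H)) (hp : ContDiff ℝ (⊤ : ℕ∞) p)
    (hproj : ∀ x, (p x) ∘L (p x) = p x)
    (hsa : ∀ x, ContinuousLinearMap.adjoint (p x) = p x)
    (hTRS : ∀ x u, p (S x) u = θ (p x (θ u)))
    (F : E → E → E → ℂ)
    (hF : ∀ x u v, F x u v =
      (-Complex.I) *
        (LinearMap.trace ℂ H ↑(p x ∘L (fderiv ℝ p x u) ∘L (fderiv ℝ p x v))
         - LinearMap.trace ℂ H ↑(p x ∘L (fderiv ℝ p x v) ∘L (fderiv ℝ p x u)))) :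
    ∀ (x : E) (u v : E),
      F (S x) (fderiv ℝ S x u) (fderiv ℝ S x v) = - F x u v := by
  have hnorm : ∀ u, ‖θ u‖ = ‖u‖ := by
    intro u
    have h : (inner ℂ (θ u) (θ u) : ℂ) = inner ℂ u u := hinner u u
    rw [inner_self_eq_norm_sq_to_K, inner_self_eq_norm_sq_to_K] at h
    have h2 : (‖θ u‖ : ℝ) ^ 2 = ‖u‖ ^ 2 := by exact_mod_cast h
    nlinarith [h2, norm_nonneg (θ u), norm_nonneg u]
  obtain ⟨Θ, hΘ⟩ := aux_exists_Theta θ hadd hsmul hnorm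
  obtain ⟨Φ, hΦ⟩ := aux_exists_adjR (H := H)
  have hpd : Differentiable ℝ p := hp.differentiable (by simp)
  have hSd : Differentiable ℝ S := hS.differentiable (by simp)
  have hPS : ∀ y, p (S y) = Θ (p y) := fun y =>
    ContinuousLinearMap.ext fun u => by rw [hTRS, hΘ]
  intro x u v
  -- chain rule
  have hchain : ∀ w, fderiv ℝ p (S x) (fderiv ℝ S x w) = Θ (fderiv ℝ p x w) := by
    intro w
    have h1 : fderiv ℝ (fun y => p (S y)) x = (fderiv ℝ p (S x)).comp (fderiv ℝ S x) :=
      fderiv_comp (x := x) (hpd (S x)) (hSd x)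
    have h2 : fderiv ℝ (fun y => Θ (p y)) x = Θ.comp (fderiv ℝ p x) := by
      have := fderiv_comp (x := x) (Θ.differentiableAt (x := p x)) (hpd x)
      rwa [Θ.fderiv] at this
    have h3 : (fun y => p (S y)) = fun y => Θ (p y) := funext hPS
    have := h1.symm.trans ((congrArg (fderiv ℝ · x) h3).trans h2)
    exact congrArg (fun (L : E →L[ℝ] (H →L[ℂ] H)) => L w) this
  -- self-adjointness of the derivative
  have hadj : ∀ w, ContinuousLinearMap.adjoint (fderiv ℝ p x w) = fderiv ℝ p x w := by
    intro w
    have h2 : fderiv ℝ (fun y => Φ (p y)) x = Φ.comp (fderiv ℝ p x) := by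
      have := fderiv_comp (x := x) (Φ.differentiableAt (x := p x)) (hpd x)
      rwa [Φ.fderiv] at this
    have h3 : (fun y => Φ (p y)) = p := funext fun y => by rw [hΦ, hsa]
    rw [h3] at h2
    calc ContinuousLinearMap.adjoint (fderiv ℝ p x w) = Φ (fderiv ℝ p x w) := (hΦ _).symm
    _ = (Φ.comp (fderiv ℝ p x)) w := rfl
    _ = fderiv ℝ p x w := by rw [← h2]
  set Du := fderiv ℝ p x u with hDu
  set Dv := fderiv ℝ p x v with hDv
  -- multiplicativity of Θ
  have hΘmul : ∀ A B : H →L[ℂ] H, Θ A ∘L Θ B = Θ (A ∘L B) := fun A B =>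
    ContinuousLinearMap.ext fun w => by
      simp only [ContinuousLinearMap.comp_apply, hΘ, hinv]
  have htrΘ : ∀ M : H →L[ℂ] H,
      LinearMap.trace ℂ H ↑(Θ M) = starRingEnd ℂ (LinearMap.trace ℂ H ↑M) := fun M =>
    aux_trace_theta θ hadd hsmul hinner hinv M (Θ M) (fun w => hΘ M w)
  -- conjugate of the trace terms
  have hconj : ∀ A B : H →L[ℂ] H, ContinuousLinearMap.adjoint A = A →
      ContinuousLinearMap.adjoint B = B →
      starRingEnd ℂ (LinearMap.trace ℂ H ↑(p x ∘L A ∘L B)) =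
        LinearMap.trace ℂ H ↑(p x ∘L B ∘L A) := by
    intro A B hA hB
    rw [← aux_trace_adjoint]
    have : ContinuousLinearMap.adjoint (p x ∘L A ∘L B) = (B ∘L A) ∘L p x := by
      rw [ContinuousLinearMap.adjoint_comp, ContinuousLinearMap.adjoint_comp, hA, hB, hsa]
    rw [this]
    exact LinearMap.trace_comp_comm' (p x : H →ₗ[ℂ] H) ((B ∘L A : H →L[ℂ] H) : H →ₗ[ℂ] H)
  have hT1 := hconj Du Dv (hadj u) (hadj v)
  have hT2 := hconj Dv Du (hadj v) (hadj u)
  rw [hF, hF, hPS, hchain u, hchain v, ← hDu, ← hDv]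
  rw [show Θ (p x) ∘L Θ Du ∘L Θ Dv = Θ (p x ∘L Du ∘L Dv) by rw [hΘmul, hΘmul]]
  rw [show Θ (p x) ∘L Θ Dv ∘L Θ Du = Θ (p x ∘L Dv ∘L Du) by rw [hΘmul, hΘmul]]
  rw [htrΘ, htrΘ, hT1, hT2]
  ring
end
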